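/- arXiv:1307.5332 — 3 statements merged into one kernel-verified Lean document; each statement's English description precedes it below -/
import Mathlib

section
/- Let N be a normal subgroup of F_r such that for each i the image s̄_i of s_i in Γ_1(N) = F_r/N has infinite order. Let p_1,…,p_r be symmetric probability measures on ℤ, let μ be the probability measure on Γ_2(N) = F_r/[N,N] given by μ(g) = (1/r)·Σ_{i=1}^r Σ_{m∈ℤ} p_i(m)·1{g = s_i^m} (s_i the image of the i-th free generator in Γ_2(N)), and let φ be the probability measure on the wreath product ℤ^r ≀ Γ_1(N) given by φ(w) = (1/r)·Σ_{i=1}^r Σ_{m∈ℤ} p_i(m)·1{w = (δ^i − τ_{s̄_i^m} δ^i, s̄_i^m)}, where δ^i : Γ_1(N) →₀ ℤ^r is supported at the identity with value the i-th standard basis vector. Then for every n ≥ 0 the return probabilities coincide: μ^{(n)}(e) = φ^{(n)}(e). -/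
open scoped Pointwise

noncomputable section

open Classical in
/-- Convolution of two real-valued functions ("measures") on a group:
`(μ ∗ ν)(g) = Σ_h μ(h) ν(h⁻¹ g)`. -/
noncomputable def conv {G : Type*} [Group G] (μ ν : G → ℝ) : G → ℝ :=
  fun g => ∑' h : G, μ h * ν (h⁻¹ * g)

open Classical in
/-- `convPow μ n` is the `n`-fold convolution power of `μ`;
`convPow μ 0` is the Dirac mass at the identity. -/
noncomputable def convPow {G : Type*} [Group G] (μ : G → ℝ) : ℕ → G → ℝ
  | 0 => fun g => if g = 1 then 1 else 0
  | n + 1 => conv μ (convPow μ n)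

/-- Pushforward of a measure along a map. -/
noncomputable def pushforward {G H : Type*} (f : G → H) (μ : G → ℝ) : H → ℝ :=
  fun h => ∑' g : {g : G // f g = h}, μ g.1

open Classical in
/-- The lazy simple random walk measure on the free group on `r` generators:
mass `1/2` at the identity and mass `1/(4r)` at each `sᵢ^{±1}`. -/
noncomputable def lazySRW (r : ℕ) : FreeGroup (Fin r) → ℝ := fun g =>
  if g = 1 then 1 / 2
  else if ∃ i : Fin r, g = FreeGroup.of i ∨ g = (FreeGroup.of i)⁻¹ then 1 / (4 * r)
  else 0

/-- The lazy simple random walk measure on the quotient `F_r / M`, i.e. the pushforward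
of `lazySRW r` under the quotient map. -/
noncomputable def lazySRWQuot (r : ℕ) (M : Subgroup (FreeGroup (Fin r))) [M.Normal] :
    FreeGroup (Fin r) ⧸ M → ℝ :=
  pushforward (QuotientGroup.mk : FreeGroup (Fin r) → FreeGroup (Fin r) ⧸ M) (lazySRW r)

/-- Iterated logarithms: `iterLog 1 x = log (1 + x)` and
`iterLog (i+1) x = log (1 + iterLog i x)`. -/
noncomputable def iterLog : ℕ → ℝ → ℝ
  | 0, x => x
  | n + 1, x => Real.log (1 + iterLog n x)

instance derivedSeriesNormal (G : Type*) [Group G] (n : ℕ) : (derivedSeries G n).Normal :=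
  derivedSeries_normal G n

/-- Translation `τ_h` on finitely supported functions: `(τ_h f)(x) = f (h⁻¹ x)`. -/
noncomputable def tau {H : Type*} [Group H] {A : Type*} [AddCommGroup A]
    (h : H) (f : H →₀ A) : H →₀ A :=
  Finsupp.equivMapDomain (Equiv.mulLeft h) f

/-- The multiplicative group structure that `AddAut M` carried in the older Mathlib
(it is now given an additive group structure instead). -/
instance addAutGroupOld (M : Type*) [Add M] : Group (AddAut M) where
  mul g h := AddEquiv.trans h g
  one := AddEquiv.refl _
  inv := AddEquiv.symm
  mul_assoc _ _ _ := rfl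
  one_mul _ := rfl
  mul_one _ := rfl
  inv_mul_cancel := AddEquiv.self_trans_symm

theorem addAutGroupOld_mul_apply {M : Type*} [Add M] (e₁ e₂ : AddAut M) (m : M) :
    (e₁ * e₂) m = e₁ (e₂ m) :=
  rfl

theorem addAutGroupOld_one_apply {M : Type*} [Add M] (m : M) :
    (1 : AddAut M) m = m :=
  rfl

/-- The translation action of `H` on `H →₀ A` by additive automorphisms,
`h · f = τ_h f`. -/
noncomputable def wreathAddAct (A H : Type*) [AddCommGroup A] [Group H] :
    H →* AddAut (H →₀ A) where
  toFun h := Finsupp.domCongr (Equiv.mulLeft h)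
  map_one' := by
    ext f x
    simp [addAutGroupOld_one_apply, Finsupp.domCongr_apply, Finsupp.equivMapDomain_apply] <;> rfl
  map_mul' h₁ h₂ := by
    ext f x
    simp [addAutGroupOld_mul_apply, Finsupp.domCongr_apply, Finsupp.equivMapDomain_apply,
      Equiv.Perm.mul_def, Equiv.symm_trans_apply, mul_assoc]

/-- The translation action, as multiplicative automorphisms of `Multiplicative (H →₀ A)`. -/
noncomputable def wreathMulAct (A H : Type*) [AddCommGroup A] [Group H] :
    H →* MulAut (Multiplicative (H →₀ A)) where
  toFun h := AddEquiv.toMultiplicative (wreathAddAct A H h)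
  map_one' := by
    show AddEquiv.toMultiplicative ((wreathAddAct A H) 1) = 1
    rw [map_one]; rfl
  map_mul' h₁ h₂ := by
    show AddEquiv.toMultiplicative ((wreathAddAct A H) (h₁ * h₂)) = _
    rw [map_mul]; rfl

/-- The (restricted) wreath product `A ≀ H`: the semidirect product
`(H →₀ A) ⋊ H` of the group of finitely supported functions `H → A` by `H`
acting by translation of indices; `(f, h)(f', h') = (f + τ_h f', h h')`. -/
abbrev Wreath (A H : Type*) [AddCommGroup A] [Group H] : Type _ :=
  Multiplicative (H →₀ A) ⋊[wreathMulAct A H] H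

/-- `delta r i` : the finitely supported function on `H` supported at the identity
with value the `i`-th standard basis vector of `ℤ^r`. -/
noncomputable def delta {H : Type*} [Group H] (r : ℕ) (i : Fin r) : H →₀ (Fin r → ℤ) :=
  Finsupp.single (1 : H) (Pi.single i (1 : ℤ))

open scoped Classical

namespace MagnusDev

open Finsupp Multiplicative

abbrev Gm (r : ℕ) (N : Subgroup (FreeGroup (Fin r))) : Type := FreeGroup (Fin r) ⧸ N

abbrev Md (r : ℕ) (N : Subgroup (FreeGroup (Fin r))) : Type := Gm r N →₀ (Fin r → ℤ)

abbrev Wr (r : ℕ) (N : Subgroup (FreeGroup (Fin r))) [N.Normal] : Type :=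
  Wreath (Fin r → ℤ) (Gm r N)

section Basic

variable {H : Type*} [Group H] {A : Type*} [AddCommGroup A]

theorem tau_apply (h : H) (f : H →₀ A) (x : H) : tau h f x = f (h⁻¹ * x) := by
  simp [tau, Finsupp.equivMapDomain_apply]

theorem tau_add (h : H) (f g : H →₀ A) : tau h (f + g) = tau h f + tau h g := by
  ext x; simp [tau_apply]

theorem tau_neg (h : H) (f : H →₀ A) : tau h (-f) = -(tau h f) := by
  ext x; simp [tau_apply]

theorem tau_zero (h : H) : tau h (0 : H →₀ A) = 0 := by
  ext x; simp [tau_apply]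

theorem tau_tau (g h : H) (f : H →₀ A) : tau g (tau h f) = tau (g * h) f := by
  ext x; simp [tau_apply, mul_assoc]

theorem tau_one (f : H →₀ A) : tau (1 : H) f = f := by
  ext x; simp [tau_apply]

theorem wreath_left_mul (a b : Wreath A H) :
    Multiplicative.toAdd ((a * b).left) =
      Multiplicative.toAdd a.left + tau a.right (Multiplicative.toAdd b.left) := rfl

theorem wreath_comm_of_right_one (a b : Wreath A H) (ha : a.right = 1) (hb : b.right = 1) :
    a * b = b * a := by
  ext : 1
  · show Multiplicative.toAdd ((a*b).left) = Multiplicative.toAdd ((b*a).left)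
    rw [wreath_left_mul, wreath_left_mul, ha, hb, tau_one, tau_one, add_comm]
  · show (a*b).right = (b*a).right
    simp [SemidirectProduct.mul_right, ha, hb]

end Basic

section Dev

variable (r : ℕ) (N : Subgroup (FreeGroup (Fin r))) [N.Normal]

def pim : FreeGroup (Fin r) →* Gm r N := QuotientGroup.mk' N

def sb (i : Fin r) : Gm r N := QuotientGroup.mk (FreeGroup.of i)

theorem pim_of (i : Fin r) : pim r N (FreeGroup.of i) = sb r N i := rfl

theorem pim_eq_one_iff (x : FreeGroup (Fin r)) : pim r N x = 1 ↔ x ∈ N :=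
  QuotientGroup.eq_one_iff x

/-- the Magnus homomorphism (twisted form, with generators `δ i - τ_{s̄ i} δ i`). -/
def Pa : FreeGroup (Fin r) →* Wr r N :=
  FreeGroup.lift fun i =>
    ⟨Multiplicative.ofAdd (delta r i - tau (sb r N i) (delta r i)), sb r N i⟩

/-- the Magnus homomorphism (standard form, Fox derivative). -/
def Pb : FreeGroup (Fin r) →* Wr r N :=
  FreeGroup.lift fun i => ⟨Multiplicative.ofAdd (delta r i), sb r N i⟩

theorem Pa_right (w : FreeGroup (Fin r)) : (Pa r N w).right = pim r N w := by
  have h : (SemidirectProduct.rightHom).comp (Pa r N) = pim r N := by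
    apply FreeGroup.ext_hom; intro i
    rw [MonoidHom.comp_apply]; unfold Pa; rw [FreeGroup.lift_apply_of]; rfl
  exact DFunLike.congr_fun h w

theorem Pb_right (w : FreeGroup (Fin r)) : (Pb r N w).right = pim r N w := by
  have h : (SemidirectProduct.rightHom).comp (Pb r N) = pim r N := by
    apply FreeGroup.ext_hom; intro i
    rw [MonoidHom.comp_apply]; unfold Pb; rw [FreeGroup.lift_apply_of]; rfl
  exact DFunLike.congr_fun h w

/-- the Fox derivative -/
def Db (w : FreeGroup (Fin r)) : Md r N := Multiplicative.toAdd ((Pb r N w).left)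

/-- the twisted derivative -/
def Da (w : FreeGroup (Fin r)) : Md r N := Multiplicative.toAdd ((Pa r N w).left)

theorem Db_mul (u v : FreeGroup (Fin r)) :
    Db r N (u * v) = Db r N u + tau (pim r N u) (Db r N v) := by
  unfold Db
  rw [map_mul, wreath_left_mul, Pb_right]

theorem Da_mul (u v : FreeGroup (Fin r)) :
    Da r N (u * v) = Da r N u + tau (pim r N u) (Da r N v) := by
  unfold Da
  rw [map_mul, wreath_left_mul, Pa_right]

theorem Db_one : Db r N 1 = 0 := by unfold Db; rw [map_one]; rfl

theorem Da_one : Da r N 1 = 0 := by unfold Da; rw [map_one]; rfl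

theorem Db_of (i : Fin r) : Db r N (FreeGroup.of i) = delta r i := by
  unfold Db Pb; rw [FreeGroup.lift_apply_of]; rfl

theorem Da_of (i : Fin r) :
    Da r N (FreeGroup.of i) = delta r i - tau (sb r N i) (delta r i) := by
  unfold Da Pa; rw [FreeGroup.lift_apply_of]; rfl

theorem Db_inv (w : FreeGroup (Fin r)) :
    Db r N w⁻¹ = -(tau (pim r N w)⁻¹ (Db r N w)) := by
  have h := Db_mul r N w w⁻¹
  rw [mul_inv_cancel, Db_one] at h
  have h3 : tau (pim r N w) (Db r N w⁻¹) = -Db r N w :=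
    eq_neg_of_add_eq_zero_right h.symm
  calc Db r N w⁻¹ = tau (pim r N w)⁻¹ (tau (pim r N w) (Db r N w⁻¹)) := by
        rw [tau_tau, inv_mul_cancel, tau_one]
    _ = -(tau (pim r N w)⁻¹ (Db r N w)) := by rw [h3, tau_neg]

theorem Da_inv (w : FreeGroup (Fin r)) :
    Da r N w⁻¹ = -(tau (pim r N w)⁻¹ (Da r N w)) := by
  have h := Da_mul r N w w⁻¹
  rw [mul_inv_cancel, Da_one] at h
  have h3 : tau (pim r N w) (Da r N w⁻¹) = -Da r N w :=
    eq_neg_of_add_eq_zero_right h.symm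
  calc Da r N w⁻¹ = tau (pim r N w)⁻¹ (tau (pim r N w) (Da r N w⁻¹)) := by
        rw [tau_tau, inv_mul_cancel, tau_one]
    _ = -(tau (pim r N w)⁻¹ (Da r N w)) := by rw [h3, tau_neg]

theorem wordLenEx (γ : Gm r N) :
    ∃ n : ℕ, ∃ l : List (Fin r × Bool), l.length = n ∧ pim r N (FreeGroup.mk l) = γ := by
  obtain ⟨w, hw⟩ := QuotientGroup.mk'_surjective N γ
  exact ⟨w.toWord.length, w.toWord, rfl, by rw [FreeGroup.mk_toWord]; exact hw⟩

/-- minimal length of a word representing `γ`. -/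
def wl (γ : Gm r N) : ℕ := Nat.find (wordLenEx r N γ)

/-- a chosen word of minimal length representing `γ`. -/
def rep (γ : Gm r N) : List (Fin r × Bool) := (Nat.find_spec (wordLenEx r N γ)).choose

theorem rep_length (γ : Gm r N) : (rep r N γ).length = wl r N γ :=
  (Nat.find_spec (wordLenEx r N γ)).choose_spec.1

theorem rep_pim (γ : Gm r N) : pim r N (FreeGroup.mk (rep r N γ)) = γ :=
  (Nat.find_spec (wordLenEx r N γ)).choose_spec.2

theorem mk_nil_eq_one : (FreeGroup.mk ([] : List (Fin r × Bool))) = 1 := rfl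

theorem rep_ne_nil {γ : Gm r N} (h : γ ≠ 1) : rep r N γ ≠ [] := by
  intro he
  apply h
  rw [← rep_pim r N γ, he, mk_nil_eq_one, map_one]

theorem wl_pos {γ : Gm r N} (h : γ ≠ 1) : 0 < wl r N γ := by
  rcases Nat.eq_zero_or_pos (wl r N γ) with h0 | h0
  · exfalso
    apply rep_ne_nil r N h
    have := rep_length r N γ
    rw [h0] at this
    exact List.length_eq_zero_iff.mp this
  · exact h0

theorem wl_dropLast_lt {γ : Gm r N} (h : γ ≠ 1) :
    wl r N (pim r N (FreeGroup.mk (rep r N γ).dropLast)) < wl r N γ := by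
  have h1 : wl r N (pim r N (FreeGroup.mk (rep r N γ).dropLast)) ≤ (rep r N γ).dropLast.length :=
    Nat.find_le ⟨(rep r N γ).dropLast, rfl, rfl⟩
  have h2 : (rep r N γ).dropLast.length = wl r N γ - 1 := by
    rw [List.length_dropLast, rep_length]
  have := wl_pos r N h
  omega

/-- a Schreier-type transversal for `N` in the free group. -/
def sig (γ : Gm r N) : FreeGroup (Fin r) :=
  if h : γ = 1 then 1
  else sig (pim r N (FreeGroup.mk (rep r N γ).dropLast)) *
    FreeGroup.mk [(rep r N γ).getLast (rep_ne_nil r N h)]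
  termination_by wl r N γ
  decreasing_by exact wl_dropLast_lt r N h

theorem sig_one : sig r N 1 = 1 := by rw [sig]; simp

theorem sig_spec {γ : Gm r N} (h : γ ≠ 1) :
    sig r N γ = sig r N (pim r N (FreeGroup.mk (rep r N γ).dropLast)) *
      FreeGroup.mk [(rep r N γ).getLast (rep_ne_nil r N h)] := by
  rw [sig]
  simp [h]

theorem pim_sig (γ : Gm r N) : pim r N (sig r N γ) = γ := by
  suffices H : ∀ (n : ℕ) (γ : Gm r N), wl r N γ ≤ n → pim r N (sig r N γ) = γ from
    H (wl r N γ) γ le_rfl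
  intro n
  induction n with
  | zero =>
    intro γ hγ
    have hγ1 : γ = 1 := by
      by_contra h
      have := wl_pos r N h
      omega
    rw [hγ1, sig_one, map_one]
  | succ n ih =>
    intro γ hγ
    by_cases h : γ = 1
    · rw [h, sig_one, map_one]
    · rw [sig_spec r N h, map_mul]
      have hlt := wl_dropLast_lt r N h
      rw [ih _ (by omega)]
      rw [← map_mul, FreeGroup.mul_mk, List.dropLast_append_getLast (rep_ne_nil r N h),
        rep_pim]

/-- the Schreier generator attached to the edge `(γ, i)` of the Cayley graph. -/
def sgen (e : Gm r N × Fin r) : FreeGroup (Fin r) :=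
  sig r N e.1 * FreeGroup.of e.2 * (sig r N (e.1 * sb r N e.2))⁻¹

theorem sgen_mem_N (e : Gm r N × Fin r) : sgen r N e ∈ N := by
  rw [← pim_eq_one_iff]
  unfold sgen
  rw [map_mul, map_mul, map_inv, pim_sig, pim_sig, pim_of]
  group

/-- coefficient of `f` at the edge `e`. -/
def co (e : Gm r N × Fin r) (f : Md r N) : ℤ := f e.1 e.2

theorem co_add (e : Gm r N × Fin r) (f g : Md r N) :
    co r N e (f + g) = co r N e f + co r N e g := by
  simp [co]

theorem co_neg (e : Gm r N × Fin r) (f : Md r N) : co r N e (-f) = -co r N e f := by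
  simp [co]

theorem mk_single_true (i : Fin r) : FreeGroup.mk [(i, true)] = FreeGroup.of i := rfl

theorem mk_single_false (i : Fin r) : FreeGroup.mk [(i, false)] = (FreeGroup.of i)⁻¹ := by
  rw [← mk_single_true, FreeGroup.inv_mk]
  rfl

theorem co_tau_delta (e : Gm r N × Fin r) (β : Gm r N) (i : Fin r) :
    co r N e (tau β (delta r i)) = if e = (β, i) then 1 else 0 := by
  obtain ⟨γ₀, i₀⟩ := e
  unfold co delta
  rw [tau_apply, Finsupp.single_apply]
  by_cases hγ : γ₀ = β
  · subst hγ
    rw [if_pos (inv_mul_cancel γ₀).symm, Pi.single_apply]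
    by_cases hi : i₀ = i
    · subst hi; simp
    · rw [if_neg hi, if_neg (fun hc => hi (congrArg Prod.snd hc))]
  · have hne : ¬ ((1 : Gm r N) = γ₀⁻¹ * γ₀) → True := fun _ => trivial
    rw [if_neg (fun hc : (1 : Gm r N) = β⁻¹ * γ₀ => hγ (by
        have := congrArg (fun z => β * z) hc
        simpa [← mul_assoc] using this.symm)),
      if_neg (fun hc => hγ (congrArg Prod.fst hc))]
    rfl

/-- an edge is a tree edge iff its Schreier generator is trivial. -/
theorem star_prop (γ : Gm r N) (e₀ : Gm r N × Fin r) (h0 : sgen r N e₀ ≠ 1) :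
    co r N e₀ (Db r N (sig r N γ)) = 0 := by
  suffices H : ∀ (n : ℕ) (γ : Gm r N), wl r N γ ≤ n →
      co r N e₀ (Db r N (sig r N γ)) = 0 from H (wl r N γ) γ le_rfl
  intro n
  induction n with
  | zero =>
    intro γ hγ
    have hγ1 : γ = 1 := by
      by_contra h
      have := wl_pos r N h
      omega
    rw [hγ1, sig_one, Db_one]
    rfl
  | succ n ih =>
    intro γ hγ
    by_cases h : γ = 1
    · rw [h, sig_one, Db_one]; rfl
    · have hlt := wl_dropLast_lt r N h
      rw [sig_spec r N h, Db_mul, co_add, ih _ (by omega), zero_add, pim_sig]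
      set β := pim r N (FreeGroup.mk (rep r N γ).dropLast) with hβ
      -- the last letter
      set x := (rep r N γ).getLast (rep_ne_nil r N h) with hx
      have hprod : β * pim r N (FreeGroup.mk [x]) = γ := by
        rw [hβ, ← map_mul, FreeGroup.mul_mk, List.dropLast_append_getLast (rep_ne_nil r N h),
          rep_pim]
      have hsig : sig r N γ = sig r N β * FreeGroup.mk [x] := sig_spec r N h
      obtain ⟨i, b⟩ := x
      cases b
      · -- letter (of i)⁻¹ : edge (γ, i) is a tree edge
        rw [mk_single_false] at hsig hprod ⊢
        rw [map_inv, pim_of] at hprod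
        rw [Db_inv, tau_neg, co_neg, Db_of, pim_of, tau_tau]
        have hkey : γ * sb r N i = β := by
          rw [← hprod, mul_assoc, inv_mul_cancel, mul_one]
        rw [co_tau_delta]
        by_cases he : e₀ = (β * (sb r N i)⁻¹, i)
        · exfalso
          apply h0
          rw [he]
          unfold sgen
          have hβγ : β * (sb r N i)⁻¹ = γ := hprod
          simp only [hβγ]
          rw [hkey, hsig]
          group
        · rw [if_neg he, neg_zero]
      · -- letter (of i) : edge (β, i) is a tree edge
        rw [mk_single_true] at hsig hprod ⊢
        rw [pim_of] at hprod
        rw [Db_of]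
        rw [co_tau_delta]
        by_cases he : e₀ = (β, i)
        · exfalso
          apply h0
          rw [he]
          unfold sgen
          rw [hprod, hsig]
          group
        · rw [if_neg he]

theorem mem_closure_sgen (w : FreeGroup (Fin r)) :
    w * (sig r N (pim r N w))⁻¹ ∈ Subgroup.closure (Set.range (sgen r N)) := by
  set E := Subgroup.closure (Set.range (sgen r N)) with hE
  suffices H : ∀ l : List (Fin r × Bool),
      FreeGroup.mk l * (sig r N (pim r N (FreeGroup.mk l)))⁻¹ ∈ E by
    have := H w.toWord
    rwa [FreeGroup.mk_toWord] at this
  intro l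
  induction l using List.reverseRecOn with
  | nil =>
    rw [mk_nil_eq_one, map_one, sig_one]
    simpa using one_mem E
  | append_singleton l x ih =>
    rw [← FreeGroup.mul_mk]
    have hsplit : FreeGroup.mk l * FreeGroup.mk [x] *
        (sig r N (pim r N (FreeGroup.mk l * FreeGroup.mk [x])))⁻¹ =
        (FreeGroup.mk l * (sig r N (pim r N (FreeGroup.mk l)))⁻¹) *
        (sig r N (pim r N (FreeGroup.mk l)) * FreeGroup.mk [x] *
          (sig r N (pim r N (FreeGroup.mk l * FreeGroup.mk [x])))⁻¹) := by
      group
    rw [hsplit]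
    apply mul_mem ih
    set γ := pim r N (FreeGroup.mk l) with hγ
    obtain ⟨i, b⟩ := x
    cases b
    · -- letter (of i)⁻¹
      rw [mk_single_false, map_mul, map_inv, pim_of]
      have : sig r N γ * (FreeGroup.of i)⁻¹ * (sig r N (γ * (sb r N i)⁻¹))⁻¹ =
          (sgen r N (γ * (sb r N i)⁻¹, i))⁻¹ := by
        unfold sgen
        simp only [mul_assoc, inv_mul_cancel, mul_one]
        group
      rw [this]
      exact inv_mem (Subgroup.subset_closure ⟨_, rfl⟩)
    · -- letter (of i)
      rw [mk_single_true, map_mul, pim_of]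
      exact Subgroup.subset_closure ⟨(γ, i), rfl⟩

theorem co_Db_sgen (e e₀ : Gm r N × Fin r) (h0 : sgen r N e₀ ≠ 1) :
    co r N e₀ (Db r N (sgen r N e)) = if e = e₀ then 1 else 0 := by
  obtain ⟨γ, i⟩ := e
  unfold sgen
  dsimp only
  rw [Db_mul, Db_mul, Db_inv, Db_of, map_mul]
  simp only [pim_sig, pim_of]
  rw [tau_neg, tau_tau, mul_inv_cancel, tau_one]
  rw [co_add, co_add, co_neg]
  rw [star_prop r N _ _ h0, star_prop r N _ _ h0, co_tau_delta]
  have : ((γ, i) : Gm r N × Fin r) = e₀ ↔ e₀ = (γ, i) := eq_comm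
  rw [zero_add, neg_zero, add_zero]
  by_cases he : e₀ = (γ, i)
  · rw [if_pos he, if_pos he.symm]
  · rw [if_neg he, if_neg (fun hc => he hc.symm)]

theorem magnus_core (x : FreeGroup (Fin r)) (hx : x ∈ N)
    (hD : Db r N x = 0) : x ∈ ⁅N, N⁆ := by
  -- x lies in the subgroup generated by Schreier generators
  have hxE : x ∈ Subgroup.closure (Set.range (sgen r N)) := by
    have := mem_closure_sgen r N x
    rw [(pim_eq_one_iff r N x).mpr hx, sig_one] at this
    simpa using this
  -- recast inside the group N
  set n' : Gm r N × Fin r → N := fun e => ⟨sgen r N e, sgen_mem_N r N e⟩ with hn'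
  have hxE' : (⟨x, hx⟩ : N) ∈ Subgroup.closure (Set.range n') := by
    have hmap : (Subgroup.closure (Set.range n')).map N.subtype =
        Subgroup.closure (Set.range (sgen r N)) := by
      rw [MonoidHom.map_closure]
      congr 1
      ext y
      constructor
      · rintro ⟨z, ⟨e, rfl⟩, rfl⟩; exact ⟨e, rfl⟩
      · rintro ⟨e, rfl⟩; exact ⟨n' e, ⟨e, rfl⟩, rfl⟩
    have : x ∈ (Subgroup.closure (Set.range n')).map N.subtype := hmap ▸ hxE
    obtain ⟨y, hy, hyx⟩ := this
    have : y = ⟨x, hx⟩ := Subtype.ext hyx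
    rwa [this] at hy
  -- the Fox derivative restricted to N, as a group hom
  set DN : N →* Multiplicative (Md r N) :=
    { toFun := fun y => Multiplicative.ofAdd (Db r N (y : FreeGroup (Fin r)))
      map_one' := by
        show Multiplicative.ofAdd (Db r N ((1 : N) : FreeGroup (Fin r))) = 1
        rw [OneMemClass.coe_one, Db_one]
        rfl
      map_mul' := by
        intro y z
        have : Db r N ((y : FreeGroup (Fin r)) * z) = Db r N y + Db r N z := by
          rw [Db_mul, (pim_eq_one_iff r N _).mpr y.2, tau_one]
        simp only [Subgroup.coe_mul, this]
        rfl } with hDN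
  -- push to the abelianization of N
  set q : N →* Abelianization N := Abelianization.of with hq
  set Dq : Abelianization N →* Multiplicative (Md r N) := Abelianization.lift DN with hDq
  -- the exponent-vector decomposition
  set P : ((Gm r N × Fin r) →₀ ℤ) →+ Additive (Abelianization N) :=
    Finsupp.liftAddHom (fun e => (zmultiplesHom (Additive (Abelianization N)))
      (Additive.ofMul (q (n' e)))) with hP
  have hqx : q ⟨x, hx⟩ ∈ Subgroup.closure (Set.range fun e => q (n' e)) := by
    have : q ⟨x, hx⟩ ∈ (Subgroup.closure (Set.range n')).map q :=
      Subgroup.mem_map_of_mem q hxE'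
    rw [MonoidHom.map_closure] at this
    have himg : q '' Set.range n' = Set.range fun e => q (n' e) := by
      ext y; constructor
      · rintro ⟨z, ⟨e, rfl⟩, rfl⟩; exact ⟨e, rfl⟩
      · rintro ⟨e, rfl⟩; exact ⟨n' e, ⟨e, rfl⟩, rfl⟩
    rwa [himg] at this
  obtain ⟨lam, hlam⟩ : ∃ lam : (Gm r N × Fin r) →₀ ℤ,
      Additive.ofMul (q ⟨x, hx⟩) = P lam := by
    set S : Set (Abelianization N) := Set.range fun e => q (n' e) with hS
    have h2 : q ⟨x, hx⟩ ∈ Submonoid.closure (S ∪ S⁻¹) := by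
      have : q ⟨x, hx⟩ ∈ (Subgroup.closure S).toSubmonoid := hqx
      rwa [Subgroup.closure_toSubmonoid] at this
    obtain ⟨L, hL, hprod⟩ := Submonoid.exists_list_of_mem_closure h2
    have Hlist : ∀ L : List (Abelianization N), (∀ y ∈ L, y ∈ S ∪ S⁻¹) →
        ∃ lam : (Gm r N × Fin r) →₀ ℤ, Additive.ofMul L.prod = P lam := by
      intro L
      induction L with
      | nil => intro _; exact ⟨0, by simp⟩
      | cons y L ihL =>
        intro hLy
        obtain ⟨lam', hlam'⟩ := ihL (fun z hz => hLy z (List.mem_cons_of_mem y hz))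
        have hy := hLy y (by simp)
        rw [List.prod_cons]
        rcases hy with hy | hy
        · obtain ⟨e, he⟩ := hy
          refine ⟨Finsupp.single e 1 + lam', ?_⟩
          rw [map_add, ← hlam', Finsupp.liftAddHom_apply_single]
          have h1 : Additive.ofMul (y * L.prod) =
              Additive.ofMul y + Additive.ofMul L.prod := rfl
          rw [h1, ← he]
          simp
        · rw [Set.mem_inv] at hy
          obtain ⟨e, he⟩ := hy
          refine ⟨Finsupp.single e (-1) + lam', ?_⟩
          rw [map_add, ← hlam', Finsupp.liftAddHom_apply_single]
          have h1 : Additive.ofMul (y * L.prod) =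
              Additive.ofMul y + Additive.ofMul L.prod := rfl
          have h2 : y = (q (n' e))⁻¹ := (inv_eq_iff_eq_inv.mpr he).symm
          rw [h1, h2]
          simp
    obtain ⟨lam, hlam⟩ := Hlist L hL
    exact ⟨lam, by rw [← hprod]; exact hlam⟩
  -- evaluate coefficients
  have hDqx : Dq (q ⟨x, hx⟩) = 1 := by
    rw [hDq, hq]
    rw [Abelianization.lift_apply_of]
    show Multiplicative.ofAdd (Db r N x) = 1
    rw [hD]
    rfl
  have hT : ∀ e₀, sgen r N e₀ ≠ 1 → lam e₀ = 0 := by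
    intro e₀ h0
    set T : Additive (Abelianization N) →+ ℤ :=
      { toFun := fun a => co r N e₀ (Multiplicative.toAdd (Dq (Additive.toMul a)))
        map_zero' := by
          show co r N e₀ (Multiplicative.toAdd (Dq 1)) = 0
          rw [map_one]
          rfl
        map_add' := by
          intro a b
          show co r N e₀ (Multiplicative.toAdd (Dq (Additive.toMul a * Additive.toMul b))) = _
          rw [map_mul]
          exact co_add r N e₀ _ _ } with hT
    have hTP : ∀ (e : Gm r N × Fin r) (k : ℤ), T (P (Finsupp.single e k)) =
        k * (if e = e₀ then 1 else 0) := by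
      intro e k
      rw [hP, Finsupp.liftAddHom_apply_single]
      have hz : (zmultiplesHom (Additive (Abelianization N))) (Additive.ofMul (q (n' e))) k =
          k • Additive.ofMul (q (n' e)) := rfl
      rw [hz, map_zsmul]
      have hTq : T (Additive.ofMul (q (n' e))) = co r N e₀ (Db r N (sgen r N e)) := by
        show co r N e₀ (Multiplicative.toAdd (Dq (q (n' e)))) = _
        rw [hDq, hq, Abelianization.lift_apply_of]
        rfl
      rw [hTq, co_Db_sgen r N e e₀ h0]
      simp [mul_comm]
    have hTlam : T (P lam) = lam e₀ := by
      conv_lhs => rw [← Finsupp.sum_single lam]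
      rw [map_finsuppSum, map_finsuppSum]
      rw [Finsupp.sum_eq_single e₀ (fun e _ hne => by rw [hTP, if_neg hne, mul_zero])
        (fun _ => by rw [Finsupp.single_zero, map_zero, map_zero])]
      rw [hTP, if_pos rfl, mul_one]
    have : T (P lam) = 0 := by
      rw [← hlam]
      show co r N e₀ (Multiplicative.toAdd (Dq (q ⟨x, hx⟩))) = 0
      rw [hDqx]
      rfl
    rw [hTlam] at this
    exact this
  -- conclude : the class of x in the abelianization is trivial
  have hP0 : P lam = 0 := by
    conv_lhs => rw [← Finsupp.sum_single lam]
    rw [map_finsuppSum, Finsupp.sum]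
    apply Finset.sum_eq_zero
    intro e he
    have hs : sgen r N e = 1 := by
      by_contra hne
      exact (Finsupp.mem_support_iff.mp he) (hT e hne)
    have : n' e = 1 := Subtype.ext hs
    rw [hP, Finsupp.liftAddHom_apply_single, this]
    simp
  have hq1 : q ⟨x, hx⟩ = 1 := by
    have := hlam.trans hP0
    exact this
  have hcomm : (⟨x, hx⟩ : N) ∈ commutator N := by
    rw [← QuotientGroup.eq_one_iff]
    exact hq1
  have hmapcomm : (commutator N).map N.subtype = ⁅N, N⁆ := by
    rw [commutator_def, Subgroup.map_commutator]
    rw [← MonoidHom.range_eq_map, N.range_subtype]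
  rw [← hmapcomm]
  exact ⟨⟨x, hx⟩, hcomm, rfl⟩

/-- the module map `θ` with `θ (δ i) = δ i - τ_{s̄ i} δ i` (right multiplication
by `1 - s̄ i` in each coordinate). -/
def theta (f : Md r N) : Md r N :=
  f - ∑ i : Fin r, Finsupp.equivMapDomain (Equiv.mulRight (sb r N i))
    (f.mapRange (fun v => Pi.single i (v i)) (by simp))

theorem theta_apply (f : Md r N) (γ : Gm r N) (j : Fin r) :
    theta r N f γ j = f γ j - f (γ * (sb r N j)⁻¹) j := by
  unfold theta
  rw [Finsupp.sub_apply, Pi.sub_apply]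
  congr 1
  rw [Finsupp.finset_sum_apply]
  rw [Finset.sum_apply]
  rw [Finset.sum_eq_single j]
  · rw [Finsupp.equivMapDomain_apply, Finsupp.mapRange_apply]
    have : (Equiv.mulRight (sb r N j)).symm γ = γ * (sb r N j)⁻¹ := rfl
    rw [this, Pi.single_eq_same]
  · intro i _ hij
    rw [Finsupp.equivMapDomain_apply, Finsupp.mapRange_apply]
    exact Pi.single_eq_of_ne (fun hc => hij hc.symm) _
  · intro h
    exact absurd (Finset.mem_univ j) h

theorem theta_add (f g : Md r N) : theta r N (f + g) = theta r N f + theta r N g := by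
  ext γ j
  simp only [theta_apply, Finsupp.add_apply, Pi.add_apply]
  ring

theorem theta_neg (f : Md r N) : theta r N (-f) = -(theta r N f) := by
  ext γ j
  simp only [theta_apply, Finsupp.neg_apply, Pi.neg_apply]
  ring

theorem theta_tau (h : Gm r N) (f : Md r N) :
    theta r N (tau h f) = tau h (theta r N f) := by
  ext γ j
  have h1 : tau h (theta r N f) γ = theta r N f (h⁻¹ * γ) := tau_apply _ _ _
  rw [theta_apply, tau_apply, tau_apply, h1, theta_apply, mul_assoc]

theorem theta_delta (i : Fin r) :
    theta r N (delta r i) = delta r i - tau (sb r N i) (delta r i) := by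
  ext γ j
  rw [theta_apply, Finsupp.sub_apply, Pi.sub_apply]
  congr 1
  rw [tau_apply]
  unfold delta
  rw [Finsupp.single_apply, Finsupp.single_apply]
  split_ifs with h2 h3 h3
  · rfl
  · have hγ : γ = sb r N j := by
      have := congrArg (fun z => z * sb r N j) h2
      simpa using this.symm
    by_cases hij : i = j
    · exact absurd (show (1 : Gm r N) = (sb r N i)⁻¹ * γ by rw [hγ, ← hij]; group) h3
    · simp [Pi.single_eq_of_ne (fun hc => hij hc.symm)]
  · have hγ : γ = sb r N i := by
      have := congrArg (fun z => sb r N i * z) h3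
      simpa [← mul_assoc] using this.symm
    by_cases hij : i = j
    · exact absurd (show (1 : Gm r N) = γ * (sb r N j)⁻¹ by rw [hγ, hij]; group) h2
    · simp [Pi.single_eq_of_ne (fun hc => hij hc.symm)]
  · rfl

theorem theta_Db (w : FreeGroup (Fin r)) :
    theta r N (Db r N w) = Da r N w := by
  induction w using FreeGroup.induction_on with
  | C1 =>
    rw [Db_one, Da_one]
    ext γ j
    rw [theta_apply]
    simp
  | of i =>
    show theta r N (Db r N (FreeGroup.of i)) = Da r N (FreeGroup.of i)
    rw [Db_of, Da_of, theta_delta]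
  | inv_of i ih =>
    show theta r N (Db r N (FreeGroup.of i)⁻¹) = Da r N (FreeGroup.of i)⁻¹
    rw [Db_inv, Da_inv, theta_neg, theta_tau,
      show theta r N (Db r N (FreeGroup.of i)) = Da r N (FreeGroup.of i) from ih]
  | mul u v ihu ihv =>
    rw [Db_mul, Da_mul, theta_add, theta_tau, ihu, ihv]

theorem theta_injective
    (hinf : ∀ i : Fin r, ¬ IsOfFinOrder
      (QuotientGroup.mk (FreeGroup.of i) : FreeGroup (Fin r) ⧸ N))
    (f : Md r N) (hf : theta r N f = 0) : f = 0 := by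
  by_contra hne
  obtain ⟨γ, hγ⟩ : ∃ γ, f γ ≠ 0 := by
    by_contra hall
    push_neg at hall
    exact hne (Finsupp.ext hall)
  obtain ⟨i, hi⟩ : ∃ i, f γ i ≠ 0 := by
    by_contra hall
    push_neg at hall
    exact hγ (funext hall)
  have hrel : ∀ β : Gm r N, f β i = f (β * (sb r N i)⁻¹) i := by
    intro β
    have := congrArg (fun g => g β i) hf
    simp only [Finsupp.coe_zero, Pi.zero_apply] at this
    rw [theta_apply] at this
    linarith [this]
  have horb : ∀ m : ℤ, f (γ * (sb r N i) ^ m) i = f γ i := by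
    have hstep : ∀ m : ℤ, f (γ * (sb r N i) ^ m) i = f (γ * (sb r N i) ^ (m - 1)) i := by
      intro m
      have := hrel (γ * (sb r N i) ^ m)
      rw [mul_assoc, ← zpow_sub_one] at this
      exact this
    have hnat : ∀ n : ℕ, f (γ * (sb r N i) ^ (n : ℤ)) i = f γ i ∧
        f (γ * (sb r N i) ^ (-(n : ℤ))) i = f γ i := by
      intro n
      induction n with
      | zero => simp
      | succ n ihn =>
        constructor
        · have := hstep ((n : ℤ) + 1)
          rw [add_sub_cancel_right] at this
          rw [show ((n + 1 : ℕ) : ℤ) = (n : ℤ) + 1 by push_cast; ring, this]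
          exact ihn.1
        · have := hstep (-(n : ℤ))
          rw [show (-(n : ℤ) - 1) = -((n + 1 : ℕ) : ℤ) by push_cast; ring] at this
          rw [← this]
          exact ihn.2
    intro m
    rcases le_or_gt 0 m with hm | hm
    · obtain ⟨n, rfl⟩ := Int.eq_ofNat_of_zero_le hm
      exact (hnat n).1
    · obtain ⟨n, rfl⟩ : ∃ n : ℕ, m = -(n : ℤ) := by
        refine ⟨m.natAbs, ?_⟩
        omega
      exact (hnat n).2
  have hinj : Function.Injective (fun m : ℤ => γ * (sb r N i) ^ m) := by
    intro m m' hmm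
    have h1 : (sb r N i) ^ m = (sb r N i) ^ m' := by
      have := hmm
      simpa using mul_left_cancel this
    have h2 : Function.Injective (fun m : ℤ => (sb r N i) ^ m) :=
      injective_zpow_iff_not_isOfFinOrder.mpr (hinf i)
    exact h2 h1
  have hmem : ∀ m : ℤ, (fun m : ℤ => γ * (sb r N i) ^ m) m ∈ (f.support : Set (Gm r N)) := by
    intro m
    simp only [Finset.coe_sort_coe, Finset.mem_coe, Finsupp.mem_support_iff]
    intro hc
    apply hi
    rw [← horb m, hc]
    rfl
  have : (f.support : Set (Gm r N)).Infinite :=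
    Set.infinite_of_injective_forall_mem hinj hmem
  exact this (Finset.finite_toSet _)

theorem commutator_le_ker_Pa : ⁅N, N⁆ ≤ (Pa r N).ker := by
  rw [Subgroup.commutator_le]
  intro u hu v hv
  rw [MonoidHom.mem_ker, map_commutatorElement]
  have hru : (Pa r N u).right = 1 := by
    rw [Pa_right, pim_eq_one_iff]; exact hu
  have hrv : (Pa r N v).right = 1 := by
    rw [Pa_right, pim_eq_one_iff]; exact hv
  rw [commutatorElement_def]
  rw [wreath_comm_of_right_one (Pa r N u) (Pa r N v) hru hrv]
  group

theorem ker_Pa_iff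
    (hinf : ∀ i : Fin r, ¬ IsOfFinOrder
      (QuotientGroup.mk (FreeGroup.of i) : FreeGroup (Fin r) ⧸ N))
    (x : FreeGroup (Fin r)) : Pa r N x = 1 ↔ x ∈ ⁅N, N⁆ := by
  constructor
  · intro h
    have hxN : x ∈ N := by
      rw [← pim_eq_one_iff, ← Pa_right, h]
      rfl
    have hDa : Da r N x = 0 := by
      unfold Da
      rw [h]
      rfl
    have hDb : Db r N x = 0 := by
      apply theta_injective r N hinf
      rw [theta_Db, hDa]
    exact magnus_core r N x hxN hDb
  · intro h
    exact commutator_le_ker_Pa r N h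

theorem wreathMulAct_toAdd (g : Gm r N) (x : Multiplicative (Md r N)) :
    Multiplicative.toAdd ((wreathMulAct (Fin r → ℤ) (Gm r N) g) x) =
      tau g (Multiplicative.toAdd x) := rfl

theorem conj_inl_inr (a : Multiplicative (Md r N)) (g : Gm r N) :
    (SemidirectProduct.inl a : Wr r N) * SemidirectProduct.inr g *
      (SemidirectProduct.inl a)⁻¹ =
      ⟨a * (wreathMulAct (Fin r → ℤ) (Gm r N) g) a⁻¹, g⟩ := by
  rw [← map_inv]
  ext
  · simp [SemidirectProduct.mul_left]
  · simp [SemidirectProduct.mul_right]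

theorem ofAdd_conj (i : Fin r) (g : Gm r N) :
    Multiplicative.ofAdd (delta r i) *
      (wreathMulAct (Fin r → ℤ) (Gm r N) g) (Multiplicative.ofAdd (delta r i))⁻¹ =
      Multiplicative.ofAdd (delta r i - tau g (delta r i)) := by
  apply Multiplicative.toAdd.injective
  rw [toAdd_mul, wreathMulAct_toAdd, toAdd_inv, toAdd_ofAdd, toAdd_ofAdd, tau_neg,
    ← sub_eq_add_neg]

theorem Pa_of_zpow (i : Fin r) (m : ℤ) :
    Pa r N (FreeGroup.of i) ^ m =
      (⟨Multiplicative.ofAdd (delta r i - tau ((sb r N i) ^ m) (delta r i)),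
        (sb r N i) ^ m⟩ : Wr r N) := by
  have h1 : Pa r N (FreeGroup.of i) =
      (SemidirectProduct.inl (Multiplicative.ofAdd (delta r i)) : Wr r N) *
      SemidirectProduct.inr (sb r N i) *
      (SemidirectProduct.inl (Multiplicative.ofAdd (delta r i)))⁻¹ := by
    rw [conj_inl_inr, ofAdd_conj]
    unfold Pa
    rw [FreeGroup.lift_apply_of]
  rw [h1, conj_zpow, ← map_zpow, conj_inl_inr, ofAdd_conj]

end Dev

end MagnusDev


/-- Proposition 3.? : if no generator is torsion in `Γ₁(N) = F_r/N`, the walk on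
`Γ₂(N) = F_r/[N,N]` driven by a measure supported on powers of the generators has exactly
the same return probabilities as the corresponding walk on `ℤ^r ≀ Γ₁(N)`. -/
theorem return_probability_eq_wreath (r : ℕ) (N : Subgroup (FreeGroup (Fin r))) [N.Normal]
    (p : Fin r → ℤ → ℝ)
    (hp0 : ∀ i m, 0 ≤ p i m)
    (hp1 : ∀ i, ∑' m : ℤ, p i m = 1)
    (hpsym : ∀ i m, p i (-m) = p i m)
    (hinf : ∀ i : Fin r, ¬ IsOfFinOrder
      (QuotientGroup.mk (FreeGroup.of i) : FreeGroup (Fin r) ⧸ N))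
    (μ : (FreeGroup (Fin r) ⧸ ⁅N, N⁆) → ℝ)
    (hμ : ∀ g, μ g = (1 / (r : ℝ)) * ∑ i : Fin r, ∑' m : ℤ,
      if g = (QuotientGroup.mk (FreeGroup.of i) : FreeGroup (Fin r) ⧸ ⁅N, N⁆) ^ m
      then p i m else 0)
    (φ : Wreath (Fin r → ℤ) (FreeGroup (Fin r) ⧸ N) → ℝ)
    (hφ : ∀ w, φ w = (1 / (r : ℝ)) * ∑ i : Fin r, ∑' m : ℤ,
      if w = (⟨Multiplicative.ofAdd
            (delta r i - tau ((QuotientGroup.mk (FreeGroup.of i) :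
              FreeGroup (Fin r) ⧸ N) ^ m) (delta r i)),
          (QuotientGroup.mk (FreeGroup.of i) : FreeGroup (Fin r) ⧸ N) ^ m⟩ :
          Wreath (Fin r → ℤ) (FreeGroup (Fin r) ⧸ N))
      then p i m else 0) :
    ∀ n : ℕ, convPow μ n 1 = convPow φ n 1 := by
  classical
  intro n
  set ψ : (FreeGroup (Fin r) ⧸ ⁅N, N⁆) →* Wreath (Fin r → ℤ) (FreeGroup (Fin r) ⧸ N) :=
    QuotientGroup.lift ⁅N, N⁆ (MagnusDev.Pa r N)
      (fun x hx => (MagnusDev.ker_Pa_iff r N hinf x).mpr hx) with hψ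
  have hψmk : ∀ w : FreeGroup (Fin r),
      ψ (QuotientGroup.mk w) = MagnusDev.Pa r N w := fun w => rfl
  have hinj : Function.Injective ψ := by
    rw [injective_iff_map_eq_one]
    intro a
    induction a using QuotientGroup.induction_on with
    | _ w =>
      intro hw
      rw [hψmk] at hw
      rw [QuotientGroup.eq_one_iff]
      exact (MagnusDev.ker_Pa_iff r N hinf w).mp hw
  have helt : ∀ (i : Fin r) (m : ℤ),
      ψ ((QuotientGroup.mk (FreeGroup.of i) : FreeGroup (Fin r) ⧸ ⁅N, N⁆) ^ m) =
      (⟨Multiplicative.ofAdd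
            (delta r i - tau ((QuotientGroup.mk (FreeGroup.of i) :
              FreeGroup (Fin r) ⧸ N) ^ m) (delta r i)),
          (QuotientGroup.mk (FreeGroup.of i) : FreeGroup (Fin r) ⧸ N) ^ m⟩ :
          Wreath (Fin r → ℤ) (FreeGroup (Fin r) ⧸ N)) := by
    intro i m
    rw [map_zpow, hψmk, MagnusDev.Pa_of_zpow]
    rfl
  have hφψ : ∀ g, φ (ψ g) = μ g := by
    intro g
    rw [hφ, hμ]
    congr 1
    apply Finset.sum_congr rfl
    intro i _
    apply tsum_congr
    intro m
    refine if_congr ?_ rfl rfl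
    rw [← helt i m]
    exact ⟨fun hh => hinj hh, fun hh => by rw [hh]⟩
  have hφ0 : ∀ w, w ∉ Set.range ψ → φ w = 0 := by
    intro w hw
    rw [hφ]
    have hz : ∀ i : Fin r, (∑' m : ℤ,
        if w = (⟨Multiplicative.ofAdd
            (delta r i - tau ((QuotientGroup.mk (FreeGroup.of i) :
              FreeGroup (Fin r) ⧸ N) ^ m) (delta r i)),
          (QuotientGroup.mk (FreeGroup.of i) : FreeGroup (Fin r) ⧸ N) ^ m⟩ :
          Wreath (Fin r → ℤ) (FreeGroup (Fin r) ⧸ N))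
        then p i m else 0) = 0 := by
      intro i
      have hz2 : ∀ m : ℤ, (if w = (⟨Multiplicative.ofAdd
            (delta r i - tau ((QuotientGroup.mk (FreeGroup.of i) :
              FreeGroup (Fin r) ⧸ N) ^ m) (delta r i)),
          (QuotientGroup.mk (FreeGroup.of i) : FreeGroup (Fin r) ⧸ N) ^ m⟩ :
          Wreath (Fin r → ℤ) (FreeGroup (Fin r) ⧸ N))
          then p i m else (0:ℝ)) = 0 := by
        intro m
        rw [if_neg]
        intro hc
        exact hw ⟨(QuotientGroup.mk (FreeGroup.of i) : FreeGroup (Fin r) ⧸ ⁅N, N⁆) ^ m,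
          by rw [helt i m, ← hc]⟩
      exact (tsum_congr hz2).trans tsum_zero
    rw [Finset.sum_congr rfl fun i _ => hz i, Finset.sum_const_zero, mul_zero]
  have key : ∀ k : ℕ, (∀ g, convPow φ k (ψ g) = convPow μ k g) ∧
      (∀ w, w ∉ Set.range ψ → convPow φ k w = 0) := by
    intro k
    induction k with
    | zero =>
      constructor
      · intro g
        simp only [convPow]
        by_cases h : g = 1
        · rw [if_pos h, if_pos (show ψ g = 1 by rw [h, map_one])]
        · rw [if_neg h,
            if_neg (show ¬ ψ g = 1 from fun hc => h (hinj (by rw [hc, map_one])))]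
      · intro w hw
        simp only [convPow]
        rw [if_neg (show ¬ w = 1 from fun hc => hw ⟨1, by rw [map_one, hc]⟩)]
    | succ k ihk =>
      constructor
      · intro g
        simp only [convPow]
        unfold conv
        have hsupp : Function.support (fun h => φ h * convPow φ k (h⁻¹ * ψ g)) ⊆
            Set.range ψ := by
          intro h hh
          rw [Function.mem_support] at hh
          by_contra hc
          apply hh
          show φ h * convPow φ k (h⁻¹ * ψ g) = 0
          rw [hφ0 h hc, zero_mul]
        rw [← Function.Injective.tsum_eq hinj hsupp]
        apply tsum_congr
        intro g'
        have h1 : (ψ g')⁻¹ * ψ g = ψ (g'⁻¹ * g) := by rw [map_mul, map_inv]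
        rw [h1, hφψ, ihk.1]
      · intro w hw
        simp only [convPow]
        unfold conv
        have hzero : ∀ h : Wreath (Fin r → ℤ) (FreeGroup (Fin r) ⧸ N),
            φ h * convPow φ k (h⁻¹ * w) = 0 := by
          intro h
          by_cases hh : h ∈ Set.range ψ
          · obtain ⟨u, rfl⟩ := hh
            have hnr : (ψ u)⁻¹ * w ∉ Set.range ψ := by
              rintro ⟨v, hv⟩
              apply hw
              refine ⟨u * v, ?_⟩
              rw [map_mul, hv]
              group
            rw [ihk.2 _ hnr, mul_zero]
          · rw [hφ0 h hh, zero_mul]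
        exact (tsum_congr hzero).trans tsum_zero
  have hfin := (key n).1 1
  rw [map_one] at hfin
  exact hfin.symm


end
end

section
/- Let N be a normal subgroup of the free group F_r on generators s_1,…,s_r, let m ≥ 1, and let δ_m : F_r → F_r be the homomorphism determined by δ_m(s_i) = s_i^m for all i. Suppose that δ_m(N) ⊆ N, that the induced homomorphism F_r/N → F_r/N is injective, and that for all 1 ≤ q ≤ m−1 and all 1 ≤ i ≤ r the image of s_i^q in F_r/N does not lie in the image of the induced homomorphism. Then δ_m([N,N]) ⊆ [N,N] and the induced homomorphism F_r/[N,N] → F_r/[N,N] is injective. -/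
noncomputable section

namespace MagnusAux

open Finsupp

variable {r : ℕ} {G : Type*} [Group G]

/-- Left translation action of `G` on `Fin r → (G →₀ ℤ)`. -/
def smulA (g : G) (x : Fin r → (G →₀ ℤ)) : Fin r → (G →₀ ℤ) :=
  fun j => Finsupp.mapDomain (fun h => g * h) (x j)

lemma smulA_one (x : Fin r → (G →₀ ℤ)) : smulA 1 x = x := by
  funext j
  show Finsupp.mapDomain (fun h => 1 * h) (x j) = x j
  simp only [one_mul]
  exact Finsupp.mapDomain_id

lemma smulA_mul (g h : G) (x : Fin r → (G →₀ ℤ)) :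
    smulA (g * h) x = smulA g (smulA h x) := by
  funext j
  simpa [smulA, Function.comp_def, mul_assoc] using
    (Finsupp.mapDomain_comp (v := x j) (f := fun a => h * a) (g := fun a => g * a))

lemma smulA_add (g : G) (x y : Fin r → (G →₀ ℤ)) :
    smulA g (x + y) = smulA g x + smulA g y := by
  funext j; simp [smulA, Finsupp.mapDomain_add]

lemma smulA_zero (g : G) : smulA g (0 : Fin r → (G →₀ ℤ)) = 0 := by
  funext j; simp [smulA]

lemma smulA_neg (g : G) (x : Fin r → (G →₀ ℤ)) : smulA g (-x) = -smulA g x := by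
  funext j
  simpa [smulA] using
    map_neg (Finsupp.mapDomain.addMonoidHom (M := ℤ) (fun h => g * h)) (x j)

/-- The "Magnus" group `G ⋉ ℤ[G]^r`. -/
@[ext] structure Mag (r : ℕ) (G : Type*) [Group G] where
  g : G
  a : Fin r → (G →₀ ℤ)

instance : Group (Mag r G) where
  mul x y := ⟨x.g * y.g, x.a + smulA x.g y.a⟩
  one := ⟨1, 0⟩
  inv x := ⟨x.g⁻¹, -smulA x.g⁻¹ x.a⟩
  mul_assoc x y z := by
    refine Mag.ext (mul_assoc _ _ _) ?_
    show (x.a + smulA x.g y.a) + smulA (x.g * y.g) z.a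
        = x.a + smulA x.g (y.a + smulA y.g z.a)
    rw [smulA_mul, smulA_add, add_assoc]
  one_mul x := by
    refine Mag.ext (one_mul _) ?_
    show (0 : Fin r → (G →₀ ℤ)) + smulA 1 x.a = x.a
    rw [smulA_one, zero_add]
  mul_one x := by
    refine Mag.ext (mul_one _) ?_
    show x.a + smulA x.g 0 = x.a
    rw [smulA_zero, add_zero]
  inv_mul_cancel x := by
    refine Mag.ext (inv_mul_cancel _) ?_
    show -smulA x.g⁻¹ x.a + smulA x.g⁻¹ x.a = 0
    rw [neg_add_cancel]

lemma mag_mul_def (x y : Mag r G) : x * y = ⟨x.g * y.g, x.a + smulA x.g y.a⟩ := rfl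

lemma mag_one_def : (1 : Mag r G) = ⟨1, 0⟩ := rfl

lemma mag_inv_def (x : Mag r G) : x⁻¹ = ⟨x.g⁻¹, -smulA x.g⁻¹ x.a⟩ := rfl

@[simp] lemma mag_mul_g (x y : Mag r G) : (x * y).g = x.g * y.g := rfl
@[simp] lemma mag_mul_a (x y : Mag r G) : (x * y).a = x.a + smulA x.g y.a := rfl
@[simp] lemma mag_one_g : (1 : Mag r G).g = 1 := rfl
@[simp] lemma mag_one_a : (1 : Mag r G).a = 0 := rfl
@[simp] lemma mag_inv_g (x : Mag r G) : (x⁻¹).g = x.g⁻¹ := rfl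
@[simp] lemma mag_inv_a (x : Mag r G) : (x⁻¹).a = -smulA x.g⁻¹ x.a := rfl

/-- Elements of the abelian kernel commute. -/
lemma mag_comm {x y : Mag r G} (hx : x.g = 1) (hy : y.g = 1) : x * y = y * x := by
  refine Mag.ext ?_ ?_
  · simp [hx, hy]
  · simp [hx, hy, smulA_one, add_comm]


section Psi

variable (N : Subgroup (FreeGroup (Fin r))) [N.Normal]

def eA (i : Fin r) : Fin r → ((FreeGroup (Fin r) ⧸ N) →₀ ℤ) :=
  Pi.single i (Finsupp.single 1 1)

def ψ : FreeGroup (Fin r) →* Mag r (FreeGroup (Fin r) ⧸ N) :=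
  FreeGroup.lift fun i => ⟨QuotientGroup.mk (FreeGroup.of i), eA N i⟩

/-- first projection as a hom -/
def fstHom : Mag r G →* G where
  toFun := Mag.g
  map_one' := rfl
  map_mul' _ _ := rfl

lemma ψ_g (w : FreeGroup (Fin r)) : (ψ N w).g = QuotientGroup.mk w := by
  have : ((fstHom).comp (ψ N)) = QuotientGroup.mk' N := by
    apply FreeGroup.ext_hom
    intro a
    simp [ψ, fstHom, FreeGroup.lift_apply_of]
  exact congrFun (congrArg (↑·) this) w

def aw (w : FreeGroup (Fin r)) : Fin r → ((FreeGroup (Fin r) ⧸ N) →₀ ℤ) := (ψ N w).a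

lemma aw_one : aw N 1 = 0 := by rw [aw, map_one]; rfl

lemma aw_mul (u v : FreeGroup (Fin r)) :
    aw N (u * v) = aw N u + smulA (QuotientGroup.mk u) (aw N v) := by
  rw [aw, map_mul, mag_mul_a, ψ_g]; rfl

lemma aw_inv (u : FreeGroup (Fin r)) :
    aw N u⁻¹ = -smulA (QuotientGroup.mk u : FreeGroup (Fin r) ⧸ N)⁻¹ (aw N u) := by
  rw [aw, map_inv, mag_inv_a, ψ_g]; rfl

lemma aw_of (i : Fin r) : aw N (FreeGroup.of i) = eA N i := by
  rw [aw, ψ, FreeGroup.lift_apply_of]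

lemma psi_comm_ker (w : FreeGroup (Fin r)) (hw : w ∈ ⁅N, N⁆) : ψ N w = 1 := by
  have hle : ⁅N, N⁆ ≤ (ψ N).ker := by
    rw [Subgroup.commutator_le]
    intro a ha b hb
    rw [MonoidHom.mem_ker, map_commutatorElement, commutatorElement_eq_one_iff_mul_comm]
    exact mag_comm (by rw [ψ_g]; exact (QuotientGroup.eq_one_iff _).mpr ha)
      (by rw [ψ_g]; exact (QuotientGroup.eq_one_iff _).mpr hb)
  exact hle hw

lemma smulA_eA (h : FreeGroup (Fin r) ⧸ N) (i : Fin r) :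
    smulA h (eA N i) = Pi.single i (Finsupp.single h (1:ℤ)) := by
  funext j
  by_cases hj : j = i
  · subst hj
    simp [smulA, eA, Pi.single_eq_same, Finsupp.mapDomain_single]
  · simp [smulA, eA, Pi.single_eq_of_ne hj, Finsupp.mapDomain_zero]

/-! ### Schreier transversal -/

attribute [local instance] Classical.propDecidable

lemma exists_word (g : FreeGroup (Fin r) ⧸ N) :
    ∃ n : ℕ, ∃ w : FreeGroup (Fin r), QuotientGroup.mk w = g ∧ w.norm = n := by
  obtain ⟨w, rfl⟩ := QuotientGroup.mk_surjective g
  exact ⟨w.norm, w, rfl, rfl⟩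

def len (g : FreeGroup (Fin r) ⧸ N) : ℕ := Nat.find (exists_word N g)

lemma len_spec (g : FreeGroup (Fin r) ⧸ N) :
    ∃ w : FreeGroup (Fin r), QuotientGroup.mk w = g ∧ w.norm = len N g :=
  Nat.find_spec (exists_word N g)

lemma len_le {g : FreeGroup (Fin r) ⧸ N} {w : FreeGroup (Fin r)}
    (h : QuotientGroup.mk w = g) : len N g ≤ w.norm :=
  Nat.find_min' _ ⟨w, h, rfl⟩

lemma exists_split (g : FreeGroup (Fin r) ⧸ N) (hg : g ≠ 1) :
    ∃ p : (FreeGroup (Fin r) ⧸ N) × (Fin r × Bool),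
      len N p.1 < len N g ∧ g = p.1 * QuotientGroup.mk (FreeGroup.mk [p.2]) := by
  obtain ⟨w, hw, hnorm⟩ := len_spec N g
  have hw1 : w ≠ 1 := by rintro rfl; exact hg (by simpa using hw.symm)
  have hl : w.toWord ≠ [] := fun h => hw1 (FreeGroup.toWord_eq_nil_iff.mp h)
  refine ⟨(QuotientGroup.mk (FreeGroup.mk w.toWord.dropLast), w.toWord.getLast hl), ?_, ?_⟩
  · calc len N _ ≤ (FreeGroup.mk w.toWord.dropLast).norm := len_le N rfl
      _ ≤ w.toWord.dropLast.length := FreeGroup.norm_mk_le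
      _ < w.toWord.length := by
          rw [List.length_dropLast]
          exact Nat.sub_lt (List.length_pos_iff.mpr hl) one_pos
      _ = len N g := hnorm
  · have hmul : FreeGroup.mk w.toWord.dropLast * FreeGroup.mk [w.toWord.getLast hl] = w := by
      rw [FreeGroup.mul_mk, List.dropLast_append_getLast hl, FreeGroup.mk_toWord]
    show g = (QuotientGroup.mk (FreeGroup.mk w.toWord.dropLast) : FreeGroup (Fin r) ⧸ N) *
      QuotientGroup.mk (FreeGroup.mk [w.toWord.getLast hl])
    rw [← QuotientGroup.mk_mul, hmul, hw]

def rep : (FreeGroup (Fin r) ⧸ N) → FreeGroup (Fin r) := fun g =>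
  if hg : g = 1 then 1
  else
    have h := (Classical.choose_spec (exists_split N g hg)).1
    rep (Classical.choose (exists_split N g hg)).1 *
      FreeGroup.mk [(Classical.choose (exists_split N g hg)).2]
termination_by g => len N g
decreasing_by exact h

lemma rep_one : rep N 1 = 1 := by rw [rep, dif_pos rfl]

lemma rep_cases (g : FreeGroup (Fin r) ⧸ N) (hg : g ≠ 1) :
    ∃ (g' : FreeGroup (Fin r) ⧸ N) (x : Fin r × Bool),
      len N g' < len N g ∧ g = g' * QuotientGroup.mk (FreeGroup.mk [x]) ∧
      rep N g = rep N g' * FreeGroup.mk [x] := by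
  obtain ⟨h1, h2⟩ := Classical.choose_spec (exists_split N g hg)
  exact ⟨_, _, h1, h2, by rw [rep, dif_neg hg]⟩

lemma mk_rep (g : FreeGroup (Fin r) ⧸ N) : QuotientGroup.mk (rep N g) = g := by
  generalize hn : len N g = n
  induction n using Nat.strong_induction_on generalizing g with
  | _ n IH =>
    subst hn
    by_cases hg : g = 1
    · subst hg; rw [rep_one]; simp
    · obtain ⟨g', x, hlt, hgeq, hrep⟩ := rep_cases N g hg
      rw [hrep, QuotientGroup.mk_mul, IH _ hlt _ rfl]
      exact hgeq.symm

/-! ### Tree edges and support -/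

def IsTree (g : FreeGroup (Fin r) ⧸ N) (i : Fin r) : Prop :=
  rep N g * FreeGroup.of i = rep N (g * QuotientGroup.mk (FreeGroup.of i))

def Supp (x : Fin r → ((FreeGroup (Fin r) ⧸ N) →₀ ℤ)) : Prop :=
  ∀ (j : Fin r) (g : FreeGroup (Fin r) ⧸ N), ¬ IsTree N g j → x j g = 0

lemma supp_zero : Supp N 0 := fun _ _ _ => rfl

lemma supp_add {x y} (hx : Supp N x) (hy : Supp N y) : Supp N (x + y) := by
  intro j g h
  simp [Pi.add_apply, Finsupp.add_apply, hx j g h, hy j g h]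

lemma supp_neg {x} (hx : Supp N x) : Supp N (-x) := by
  intro j g h
  simp [Pi.neg_apply, Finsupp.neg_apply, hx j g h]

lemma supp_pi_single {g : FreeGroup (Fin r) ⧸ N} {i : Fin r} (h : IsTree N g i) :
    Supp N (Pi.single i (Finsupp.single g (1:ℤ))) := by
  intro j g' hnt
  by_cases hj : j = i
  · subst hj
    rw [Pi.single_eq_same]
    rcases eq_or_ne g' g with rfl | hgg
    · exact absurd h hnt
    · exact Finsupp.single_eq_of_ne' (Ne.symm hgg)
  · simp [Pi.single_eq_of_ne hj]

lemma mk_single_true (i : Fin r) : FreeGroup.mk [(i, true)] = FreeGroup.of i := rfl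

lemma mk_single_false (i : Fin r) : FreeGroup.mk [(i, false)] = (FreeGroup.of i)⁻¹ := by
  rw [← mk_single_true, FreeGroup.inv_mk]
  simp [FreeGroup.invRev]

lemma supp_rep (g : FreeGroup (Fin r) ⧸ N) : Supp N (aw N (rep N g)) := by
  generalize hn : len N g = n
  induction n using Nat.strong_induction_on generalizing g with
  | _ n IH =>
    subst hn
    by_cases hg : g = 1
    · subst hg; rw [rep_one, aw_one]; exact supp_zero N
    · obtain ⟨g', ⟨i, b⟩, hlt, hgeq, hrep⟩ := rep_cases N g hg
      cases b
      · -- backwards edge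
        rw [mk_single_false] at hrep hgeq
        have htree : IsTree N g i := by
          unfold IsTree
          have : g * QuotientGroup.mk (FreeGroup.of i) = g' := by
            rw [hgeq]; simp [QuotientGroup.mk_inv]
          rw [this, hrep, inv_mul_cancel_right]
        have hcomp : aw N (rep N g)
            = aw N (rep N g') + -Pi.single i (Finsupp.single g (1:ℤ)) := by
          rw [hrep, aw_mul, aw_inv, aw_of, mk_rep, smulA_neg, ← smulA_mul, smulA_eA]
          congr 2
          rw [hgeq]
          simp [QuotientGroup.mk_inv]
        rw [hcomp]
        exact supp_add N (IH _ hlt _ rfl) (supp_neg N (supp_pi_single N htree))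
      · -- forwards edge
        rw [mk_single_true] at hrep hgeq
        have htree : IsTree N g' i := by
          unfold IsTree
          rw [← hgeq, ← hrep]
        have hcomp : aw N (rep N g)
            = aw N (rep N g') + Pi.single i (Finsupp.single g' (1:ℤ)) := by
          rw [hrep, aw_mul, aw_of, mk_rep, smulA_eA]
        rw [hcomp]
        exact supp_add N (IH _ hlt _ rfl) (supp_pi_single N htree)

/-! ### Schreier generators -/

def sgen (g : FreeGroup (Fin r) ⧸ N) (i : Fin r) : FreeGroup (Fin r) :=
  rep N g * FreeGroup.of i * (rep N (g * QuotientGroup.mk (FreeGroup.of i)))⁻¹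

lemma sgen_mem (g : FreeGroup (Fin r) ⧸ N) (i : Fin r) : sgen N g i ∈ N := by
  rw [← QuotientGroup.eq_one_iff]
  rw [sgen, QuotientGroup.mk_mul, QuotientGroup.mk_mul, QuotientGroup.mk_inv,
    mk_rep, mk_rep]
  group

lemma sgen_of_tree {g : FreeGroup (Fin r) ⧸ N} {i : Fin r} (h : IsTree N g i) :
    sgen N g i = 1 := by
  rw [sgen, h, mul_inv_cancel]

lemma aw_sgen_eq (g : FreeGroup (Fin r) ⧸ N) (i : Fin r) :
    aw N (sgen N g i) = aw N (rep N g) + Pi.single i (Finsupp.single g (1:ℤ))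
      + -(aw N (rep N (g * QuotientGroup.mk (FreeGroup.of i)))) := by
  simp only [sgen, aw_mul, aw_inv, aw_of, QuotientGroup.mk_mul, QuotientGroup.mk_inv,
    mk_rep, smulA_neg, ← smulA_mul, smulA_eA]
  rw [mul_inv_cancel, smulA_one]

lemma aw_sgen_apply {h : FreeGroup (Fin r) ⧸ N} {j : Fin r} (hnt : ¬ IsTree N h j)
    (g : FreeGroup (Fin r) ⧸ N) (i : Fin r) :
    aw N (sgen N g i) j h = if g = h ∧ i = j then 1 else 0 := by
  rw [aw_sgen_eq]
  rw [Pi.add_apply, Pi.add_apply, Pi.neg_apply, Finsupp.add_apply, Finsupp.add_apply,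
    Finsupp.neg_apply, supp_rep N g j h hnt, supp_rep N _ j h hnt]
  by_cases hij : i = j
  · subst hij
    rw [Pi.single_eq_same, Finsupp.single_apply]
    by_cases hgh : g = h <;> simp [hgh]
  · rw [Pi.single_eq_of_ne (fun e => hij e.symm)]
    simp [hij]

/-! ### The quotient by `⁅N, N⁆` -/

def NB : Subgroup (FreeGroup (Fin r) ⧸ ⁅N, N⁆) :=
  Subgroup.map (QuotientGroup.mk' ⁅N, N⁆) N

instance : CommGroup ↥(NB N) :=
  { (inferInstance : Group ↥(NB N)) with
    mul_comm := by
      rintro ⟨x, a, ha, rfl⟩ ⟨y, b, hb, rfl⟩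
      refine Subtype.ext ?_
      show QuotientGroup.mk' ⁅N, N⁆ a * QuotientGroup.mk' ⁅N, N⁆ b
        = QuotientGroup.mk' ⁅N, N⁆ b * QuotientGroup.mk' ⁅N, N⁆ a
      rw [← commutatorElement_eq_one_iff_mul_comm, ← map_commutatorElement]
      exact (QuotientGroup.eq_one_iff _).mpr
        (Subgroup.commutator_mem_commutator ha hb) }

def nb (g : FreeGroup (Fin r) ⧸ N) (i : Fin r) : ↥(NB N) :=
  ⟨QuotientGroup.mk (sgen N g i), Subgroup.mem_map.mpr ⟨_, sgen_mem N g i, rfl⟩⟩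

lemma prod_negc {α M : Type*} [CommGroup M] (c : α →₀ ℤ) (f : α → M) :
    ((-c).prod fun p k => f p ^ k) = (c.prod fun p k => f p ^ k)⁻¹ := by
  rw [Finsupp.prod, Finsupp.prod, Finsupp.support_neg, ← Finset.prod_inv_distrib]
  exact Finset.prod_congr rfl fun p _ => by rw [Finsupp.neg_apply, zpow_neg]

lemma sum_negc {α β : Type*} [AddCommGroup β] (c : α →₀ ℤ) (v : α → β) :
    ((-c).sum fun p k => k • v p) = -(c.sum fun p k => k • v p) := by
  rw [Finsupp.sum, Finsupp.sum, Finsupp.support_neg, ← Finset.sum_neg_distrib]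
  exact Finset.sum_congr rfl fun p _ => by rw [Finsupp.neg_apply, neg_smul]

lemma sum_addc {α β : Type*} [AddCommGroup β] (c₁ c₂ : α →₀ ℤ) (v : α → β) :
    ((c₁ + c₂).sum fun p k => k • v p)
      = (c₁.sum fun p k => k • v p) + (c₂.sum fun p k => k • v p) :=
  Finsupp.sum_add_index' (fun _ => zero_smul ℤ _) (fun _ k l => add_smul k l _)

lemma rho_mk (g : FreeGroup (Fin r) ⧸ N) (w : FreeGroup (Fin r)) :
    (QuotientGroup.mk (rep N g * w * (rep N (g * QuotientGroup.mk w))⁻¹) :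
      FreeGroup (Fin r) ⧸ N) = 1 := by
  rw [QuotientGroup.mk_mul, QuotientGroup.mk_mul, QuotientGroup.mk_inv, mk_rep, mk_rep]
  group

set_option maxHeartbeats 1000000 in
lemma key_rewrite (w : FreeGroup (Fin r)) :
    ∀ g : FreeGroup (Fin r) ⧸ N, ∃ c : ((FreeGroup (Fin r) ⧸ N) × Fin r) →₀ ℤ,
      (QuotientGroup.mk (rep N g * w * (rep N (g * QuotientGroup.mk w))⁻¹) :
          FreeGroup (Fin r) ⧸ ⁅N, N⁆)
        = ((c.prod fun p k => nb N p.1 p.2 ^ k : ↥(NB N)) : FreeGroup (Fin r) ⧸ ⁅N, N⁆) ∧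
      aw N (rep N g * w * (rep N (g * QuotientGroup.mk w))⁻¹)
        = c.sum fun p k => k • aw N (sgen N p.1 p.2) := by
  induction w using FreeGroup.induction_on with
  | C1 =>
    intro g
    refine ⟨0, ?_, ?_⟩
    · rw [Finsupp.prod_zero_index]
      simp
    · rw [Finsupp.sum_zero_index]
      simp [aw_one]
  | of x =>
    intro g
    refine ⟨Finsupp.single (g, x) 1, ?_, ?_⟩
    · rw [Finsupp.prod_single_index (by exact zpow_zero _), zpow_one]
      rfl
    · rw [Finsupp.sum_single_index (by exact zero_smul ℤ _), one_smul]
      rfl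
  | inv_of x IH =>
    intro g
    obtain ⟨c, h1, h2⟩ := IH (g * (QuotientGroup.mk (FreeGroup.of x))⁻¹)
    have hg' : g * (QuotientGroup.mk (FreeGroup.of x))⁻¹ * QuotientGroup.mk (FreeGroup.of x)
        = g := inv_mul_cancel_right _ _
    have hrho : rep N g * (FreeGroup.of x)⁻¹ *
          (rep N (g * QuotientGroup.mk (FreeGroup.of x)⁻¹))⁻¹
        = (rep N (g * (QuotientGroup.mk (FreeGroup.of x))⁻¹) * FreeGroup.of x *
            (rep N (g * (QuotientGroup.mk (FreeGroup.of x))⁻¹ *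
              QuotientGroup.mk (FreeGroup.of x)))⁻¹)⁻¹ := by
      rw [hg', QuotientGroup.mk_inv]
      group
    refine ⟨-c, ?_, ?_⟩
    · show (QuotientGroup.mk (rep N g * (FreeGroup.of x)⁻¹ *
          (rep N (g * QuotientGroup.mk (FreeGroup.of x)⁻¹))⁻¹) :
            FreeGroup (Fin r) ⧸ ⁅N, N⁆) = _
      rw [hrho, QuotientGroup.mk_inv, h1, prod_negc]
      rfl
    · show aw N (rep N g * (FreeGroup.of x)⁻¹ *
          (rep N (g * QuotientGroup.mk (FreeGroup.of x)⁻¹))⁻¹) = _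
      rw [hrho, aw_inv, rho_mk, sum_negc, ← h2, inv_one, smulA_one]
  | mul u v IHu IHv =>
    intro g
    obtain ⟨c₁, hu1, hu2⟩ := IHu g
    obtain ⟨c₂, hv1, hv2⟩ := IHv (g * QuotientGroup.mk u)
    have hrho : rep N g * (u * v) * (rep N (g * QuotientGroup.mk (u * v)))⁻¹
        = (rep N g * u * (rep N (g * QuotientGroup.mk u))⁻¹) *
          (rep N (g * QuotientGroup.mk u) * v *
            (rep N (g * QuotientGroup.mk u * QuotientGroup.mk v))⁻¹) := by
      rw [QuotientGroup.mk_mul, ← mul_assoc g (QuotientGroup.mk u) (QuotientGroup.mk v)]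
      group
    refine ⟨c₁ + c₂, ?_, ?_⟩
    · rw [hrho, QuotientGroup.mk_mul, hu1, hv1,
        Finsupp.prod_add_index' (fun p => zpow_zero _) (fun p k l => zpow_add _ _ _)]
      rfl
    · rw [hrho, aw_mul, rho_mk, smulA_one, hu2, hv2, sum_addc]

theorem magnus_inj (n : FreeGroup (Fin r)) (hn : n ∈ N) (ha : aw N n = 0) :
    n ∈ ⁅N, N⁆ := by
  obtain ⟨c, h1, h2⟩ := key_rewrite N n 1
  have hmk1 : (QuotientGroup.mk n : FreeGroup (Fin r) ⧸ N) = 1 :=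
    (QuotientGroup.eq_one_iff n).mpr hn
  rw [hmk1, mul_one, rep_one] at h1 h2
  rw [one_mul, inv_one, mul_one] at h1 h2
  have hzero : ∀ p ∈ c.support, IsTree N p.1 p.2 := by
    intro p hp
    by_contra hnt
    have h3 : aw N n p.2 p.1 = c p := by
      rw [h2]
      simp only [Finsupp.sum, Finset.sum_apply, Pi.smul_apply,
        Finsupp.finset_sum_apply, Finsupp.smul_apply, smul_eq_mul]
      rw [Finset.sum_eq_single p]
      · rw [aw_sgen_apply N hnt, if_pos ⟨rfl, rfl⟩, mul_one]
      · intro q hq hqp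
        rw [aw_sgen_apply N hnt, if_neg, mul_zero]
        rintro ⟨e1, e2⟩
        exact hqp (Prod.ext e1 e2)
      · intro hps
        exact absurd hps (by simpa using hp)
    rw [ha] at h3
    simp only [Pi.zero_apply, Finsupp.coe_zero] at h3
    exact (Finsupp.mem_support_iff.mp hp) h3.symm
  have hprod1 : (c.prod fun p k => nb N p.1 p.2 ^ k) = 1 := by
    rw [Finsupp.prod]
    apply Finset.prod_eq_one
    intro p hp
    have h4 : nb N p.1 p.2 = 1 := by
      refine Subtype.ext ?_
      show (QuotientGroup.mk (sgen N p.1 p.2) : FreeGroup (Fin r) ⧸ ⁅N, N⁆) = 1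
      rw [sgen_of_tree N (hzero p hp)]
      exact QuotientGroup.mk_one _
    rw [h4, one_zpow]
  rw [hprod1] at h1
  refine (QuotientGroup.eq_one_iff n).mp ?_
  rw [h1]
  rfl


/-! ### The endomorphism δ_m and the twisted map Λ -/

lemma mag_pow (z : Mag r G) (n : ℕ) :
    z ^ n = ⟨z.g ^ n, ∑ q ∈ Finset.range n, smulA (z.g ^ q) z.a⟩ := by
  induction n with
  | zero => simp [mag_one_def]
  | succ n ih =>
    rw [pow_succ, ih, mag_mul_def]
    refine Mag.ext (by rw [← pow_succ]) ?_
    show (∑ q ∈ Finset.range n, smulA (z.g ^ q) z.a) + smulA (z.g ^ n) z.a = _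
    rw [Finset.sum_range_succ]

def lam (m : ℕ) (φ : G →* G) (σ : Fin r → G) (x : Fin r → (G →₀ ℤ)) :
    Fin r → (G →₀ ℤ) :=
  fun j => ∑ q ∈ Finset.range m, Finsupp.mapDomain (fun h => φ h * σ j ^ q) (x j)

lemma lam_zero (m : ℕ) (φ : G →* G) (σ : Fin r → G) : lam m φ σ 0 = 0 := by
  funext j; simp [lam]

lemma lam_add (m : ℕ) (φ : G →* G) (σ : Fin r → G) (x y : Fin r → (G →₀ ℤ)) :
    lam m φ σ (x + y) = lam m φ σ x + lam m φ σ y := by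
  funext j
  simp [lam, Finsupp.mapDomain_add, Finset.sum_add_distrib]

lemma lam_smulA (m : ℕ) (φ : G →* G) (σ : Fin r → G) (g : G) (x : Fin r → (G →₀ ℤ)) :
    lam m φ σ (smulA g x) = smulA (φ g) (lam m φ σ x) := by
  funext j
  show ∑ q ∈ Finset.range m, Finsupp.mapDomain (fun h => φ h * σ j ^ q)
      (Finsupp.mapDomain (fun h => g * h) (x j))
    = Finsupp.mapDomain (fun h => φ g * h)
      (∑ q ∈ Finset.range m, Finsupp.mapDomain (fun h => φ h * σ j ^ q) (x j))
  rw [Finsupp.mapDomain_finset_sum]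
  refine Finset.sum_congr rfl fun q _ => ?_
  show Finsupp.mapDomain (fun h => φ h * σ j ^ q) (Finsupp.mapDomain (fun h => g * h) (x j))
    = Finsupp.mapDomain (fun h => φ g * h) (Finsupp.mapDomain (fun h => φ h * σ j ^ q) (x j))
  rw [← Finsupp.mapDomain_comp, ← Finsupp.mapDomain_comp]
  congr 1
  funext h
  simp [Function.comp, map_mul, mul_assoc]

def theta (m : ℕ) (φ : G →* G) (σ : Fin r → G) : Mag r G →* Mag r G where
  toFun z := ⟨φ z.g, lam m φ σ z.a⟩
  map_one' := by
    refine Mag.ext ?_ ?_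
    · show φ (1 : Mag r G).g = 1
      rw [mag_one_g, map_one]
    · show lam m φ σ (1 : Mag r G).a = 0
      rw [mag_one_a, lam_zero]
  map_mul' x y := by
    refine Mag.ext ?_ ?_
    · show φ (x * y).g = φ x.g * φ y.g
      rw [mag_mul_g, map_mul]
    · show lam m φ σ ((x * y).a) = lam m φ σ x.a + smulA (φ x.g) (lam m φ σ y.a)
      rw [mag_mul_a, lam_add, lam_smulA]

lemma lam_inj {m : ℕ} (hm : 1 ≤ m) (φ : G →* G) (σ : Fin r → G)
    (hφ : Function.Injective φ)
    (hr : ∀ q : ℕ, 1 ≤ q → q ≤ m - 1 → ∀ i : Fin r, σ i ^ q ∉ Set.range φ)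
    {x : Fin r → (G →₀ ℤ)} (hx : lam m φ σ x = 0) : x = 0 := by
  funext j
  ext g₀
  have h0 : (∑ q ∈ Finset.range m,
      Finsupp.mapDomain (fun h => φ h * σ j ^ q) (x j)) (φ g₀) = 0 := by
    rw [show (∑ q ∈ Finset.range m, Finsupp.mapDomain (fun h => φ h * σ j ^ q) (x j))
        = lam m φ σ x j from rfl, hx]
    rfl
  rw [Finsupp.finset_sum_apply] at h0
  rw [Finset.sum_eq_single_of_mem 0 (Finset.mem_range.mpr hm)] at h0
  · have : Finsupp.mapDomain (fun h => φ h * σ j ^ 0) (x j) (φ g₀) = x j g₀ := by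
      simp only [pow_zero, mul_one]
      exact Finsupp.mapDomain_apply hφ _ _
    rw [this] at h0
    simpa using h0
  · intro q hq hq0
    apply Finsupp.mapDomain_notin_range
    rintro ⟨h, hh⟩
    refine hr q (Nat.one_le_iff_ne_zero.mpr hq0)
      (Nat.le_sub_one_of_lt (Finset.mem_range.mp hq)) j ⟨h⁻¹ * g₀, ?_⟩
    rw [map_mul, map_inv]
    rw [← hh]
    group

section Delta

variable (N : Subgroup (FreeGroup (Fin r))) [N.Normal] (m : ℕ)
variable (h₁ : N ≤ Subgroup.comap (FreeGroup.lift fun i => (FreeGroup.of i) ^ m) N)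

lemma psi_delta :
    (ψ N).comp (FreeGroup.lift fun i => (FreeGroup.of i) ^ m)
      = (theta m (QuotientGroup.map N N (FreeGroup.lift fun i => (FreeGroup.of i) ^ m) h₁)
          (fun i => QuotientGroup.mk (FreeGroup.of i))).comp (ψ N) := by
  apply FreeGroup.ext_hom
  intro i
  rw [MonoidHom.comp_apply, MonoidHom.comp_apply, FreeGroup.lift_apply_of, map_pow]
  rw [show ψ N (FreeGroup.of i)
      = ⟨QuotientGroup.mk (FreeGroup.of i), eA N i⟩ from FreeGroup.lift_apply_of]
  rw [mag_pow]
  refine Mag.ext ?_ ?_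
  · show (QuotientGroup.mk (FreeGroup.of i) : FreeGroup (Fin r) ⧸ N) ^ m
      = QuotientGroup.map N N (FreeGroup.lift fun i => (FreeGroup.of i) ^ m) h₁
          (QuotientGroup.mk (FreeGroup.of i))
    rw [QuotientGroup.map_mk, FreeGroup.lift_apply_of, QuotientGroup.mk_pow]
  · show ∑ q ∈ Finset.range m,
        smulA ((QuotientGroup.mk (FreeGroup.of i) : FreeGroup (Fin r) ⧸ N) ^ q) (eA N i)
      = lam m (QuotientGroup.map N N (FreeGroup.lift fun i => (FreeGroup.of i) ^ m) h₁)
          (fun i => QuotientGroup.mk (FreeGroup.of i)) (eA N i)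
    funext j
    rw [show lam m (QuotientGroup.map N N (FreeGroup.lift fun i => (FreeGroup.of i) ^ m) h₁)
        (fun i => QuotientGroup.mk (FreeGroup.of i)) (eA N i) j
      = ∑ q ∈ Finset.range m,
          Finsupp.mapDomain
            (fun h => QuotientGroup.map N N (FreeGroup.lift fun i => (FreeGroup.of i) ^ m) h₁ h
              * (QuotientGroup.mk (FreeGroup.of j) : FreeGroup (Fin r) ⧸ N) ^ q)
            (eA N i j) from rfl]
    rw [Finset.sum_apply]
    refine Finset.sum_congr rfl fun q _ => ?_
    by_cases hj : j = i
    · subst hj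
      show Finsupp.mapDomain (fun h => (QuotientGroup.mk (FreeGroup.of j) :
          FreeGroup (Fin r) ⧸ N) ^ q * h) (eA N j j) = _
      rw [show eA N j j = Finsupp.single 1 1 from Pi.single_eq_same _ _]
      rw [Finsupp.mapDomain_single, Finsupp.mapDomain_single]
      rw [mul_one, map_one, one_mul]
    · show Finsupp.mapDomain _ (eA N i j) = Finsupp.mapDomain _ (eA N i j)
      rw [show eA N i j = 0 from Pi.single_eq_of_ne hj _]
      rw [Finsupp.mapDomain_zero, Finsupp.mapDomain_zero]

end Delta

end Psi


end MagnusAux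

open MagnusAux

/-- Lemma: let `δ_m : F_r → F_r` be the homomorphism `sᵢ ↦ sᵢ^m`. If `δ_m(N) ⊆ N`, the
induced map `F_r/N → F_r/N` is injective, and no `sᵢ^q` (`1 ≤ q ≤ m−1`) lies mod `N` in the
image of the induced map, then `δ_m([N,N]) ⊆ [N,N]` and the induced map
`F_r/[N,N] → F_r/[N,N]` is injective. -/
theorem deltaM_injective_on_gamma2 (r m : ℕ) (hm : 1 ≤ m)
    (N : Subgroup (FreeGroup (Fin r))) [N.Normal]
    (h₁ : N ≤ Subgroup.comap (FreeGroup.lift fun i => (FreeGroup.of i) ^ m) N)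
    (hinj : Function.Injective
      (QuotientGroup.map N N (FreeGroup.lift fun i => (FreeGroup.of i) ^ m) h₁))
    (hpow : ∀ q : ℕ, 1 ≤ q → q ≤ m - 1 → ∀ i : Fin r,
      (QuotientGroup.mk ((FreeGroup.of i) ^ q) : FreeGroup (Fin r) ⧸ N) ∉
        Set.range (QuotientGroup.map N N (FreeGroup.lift fun i => (FreeGroup.of i) ^ m) h₁)) :
    ∃ h₂ : ⁅N, N⁆ ≤ Subgroup.comap (FreeGroup.lift fun i => (FreeGroup.of i) ^ m) ⁅N, N⁆,
      Function.Injective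
        (QuotientGroup.map ⁅N, N⁆ ⁅N, N⁆ (FreeGroup.lift fun i => (FreeGroup.of i) ^ m) h₂) := by
  have h₂ : ⁅N, N⁆ ≤ Subgroup.comap (FreeGroup.lift fun i => (FreeGroup.of i) ^ m) ⁅N, N⁆ := by
    rw [Subgroup.commutator_le]
    intro a ha b hb
    rw [Subgroup.mem_comap, map_commutatorElement]
    exact Subgroup.commutator_mem_commutator (h₁ ha) (h₁ hb)
  refine ⟨h₂, ?_⟩
  have key : ∀ w : FreeGroup (Fin r),
      (FreeGroup.lift fun i => (FreeGroup.of i) ^ m) w ∈ ⁅N, N⁆ → w ∈ ⁅N, N⁆ := by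
    intro w hw
    have hwN : w ∈ N := by
      have h5 : (QuotientGroup.mk ((FreeGroup.lift fun i => (FreeGroup.of i) ^ m) w) :
          FreeGroup (Fin r) ⧸ N) = 1 :=
        (QuotientGroup.eq_one_iff _).mpr (Subgroup.commutator_le_left N N hw)
      have h6 : QuotientGroup.map N N (FreeGroup.lift fun i => (FreeGroup.of i) ^ m) h₁
          (QuotientGroup.mk w) = 1 := by
        rw [QuotientGroup.map_mk]
        exact h5
      have h7 := hinj (a₁ := QuotientGroup.mk w) (a₂ := 1) (by rw [h6, map_one])
      exact (QuotientGroup.eq_one_iff _).mp h7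
    have haw : aw N ((FreeGroup.lift fun i => (FreeGroup.of i) ^ m) w) = 0 := by
      rw [aw, psi_comm_ker N _ hw]
      rfl
    have hchain : aw N ((FreeGroup.lift fun i => (FreeGroup.of i) ^ m) w)
        = lam m (QuotientGroup.map N N (FreeGroup.lift fun i => (FreeGroup.of i) ^ m) h₁)
            (fun i => QuotientGroup.mk (FreeGroup.of i)) (aw N w) := by
      have hc := DFunLike.congr_fun (psi_delta N m h₁) w
      rw [MonoidHom.comp_apply, MonoidHom.comp_apply] at hc
      have := congrArg Mag.a hc
      exact this
    have hx : aw N w = 0 := by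
      refine lam_inj hm _ _ hinj ?_ (by rw [← hchain, haw])
      intro q hq1 hq2 i hmem
      refine hpow q hq1 hq2 i ?_
      rwa [QuotientGroup.mk_pow]
    exact magnus_inj N w hwN hx
  rw [injective_iff_map_eq_one]
  intro x hx
  obtain ⟨w, rfl⟩ := QuotientGroup.mk_surjective x
  rw [QuotientGroup.map_mk] at hx
  exact (QuotientGroup.eq_one_iff _).mpr (key w ((QuotientGroup.eq_one_iff _).mp hx))

end
end

section
/- Let G be a finitely generated nilpotent group generated by elements s_1,…,s_r, and let m ≥ 1. Then the subgroup ⟨s_1^m,…,s_r^m⟩ generated by the m-th powers of the generators has finite index in G. -/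
open Subgroup Pointwise
open scoped commutatorElement

universe u

section Helpers

variable {G : Type u} [Group G]

lemma comm_mul_left_eq (a b u : G) : ⁅a * b, u⁆ = a * ⁅b, u⁆ * a⁻¹ * ⁅a, u⁆ := by
  simp only [commutatorElement_def]; group

lemma comm_mul_right_eq (a u v : G) : ⁅a, u * v⁆ = ⁅a, u⁆ * (u * ⁅a, v⁆ * u⁻¹) := by
  simp only [commutatorElement_def]; group

lemma comm_eq_one_of_central {z : G} (hz : ∀ g : G, g * z = z * g) (a : G) : ⁅a, z⁆ = 1 := by
  rw [commutatorElement_def, hz a, mul_inv_cancel_right, mul_inv_cancel]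

lemma comm_eq_one_of_central' {z : G} (hz : ∀ g : G, g * z = z * g) (a : G) : ⁅z, a⁆ = 1 := by
  rw [← commutatorElement_inv, comm_eq_one_of_central hz, inv_one]

lemma comm_mul_right_central (a x y : G) (hcy : ∀ g : G, g * ⁅a, y⁆ = ⁅a, y⁆ * g) :
    ⁅a, x * y⁆ = ⁅a, x⁆ * ⁅a, y⁆ := by
  rw [comm_mul_right_eq, hcy x, mul_assoc, mul_inv_cancel, mul_one]

lemma comm_mul_left_central (a b u : G) (hcb : ∀ g : G, g * ⁅b, u⁆ = ⁅b, u⁆ * g) :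
    ⁅a * b, u⁆ = ⁅b, u⁆ * ⁅a, u⁆ := by
  rw [comm_mul_left_eq, hcb a, mul_assoc ⁅b, u⁆ a a⁻¹, mul_inv_cancel, mul_one]

lemma comm_inv_right_central (a x : G) (h₁ : ∀ g : G, g * ⁅a, x⁻¹⁆ = ⁅a, x⁻¹⁆ * g) :
    ⁅a, x⁻¹⁆ = ⁅a, x⁆⁻¹ := by
  have h0 : ⁅a, x * x⁻¹⁆ = ⁅a, x⁆ * ⁅a, x⁻¹⁆ := comm_mul_right_central a x x⁻¹ h₁
  rw [mul_inv_cancel, commutatorElement_one_right] at h0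
  exact (eq_inv_of_mul_eq_one_right h0.symm)

lemma comm_inv_left_central (a u : G) (h : ∀ g : G, g * ⁅a⁻¹, u⁆ = ⁅a⁻¹, u⁆ * g) :
    ⁅a⁻¹, u⁆ = ⁅a, u⁆⁻¹ := by
  have h0 : ⁅a * a⁻¹, u⁆ = ⁅a⁻¹, u⁆ * ⁅a, u⁆ := comm_mul_left_central a a⁻¹ u h
  rw [mul_inv_cancel, commutatorElement_one_left] at h0
  exact eq_inv_of_mul_eq_one_left h0.symm

lemma comm_central_right_left (a z w : G) (hz : ∀ g : G, g * z = z * g) :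
    ⁅a, z * w⁆ = ⁅a, w⁆ := by
  rw [comm_mul_right_eq, comm_eq_one_of_central hz, one_mul, ← hz ⁅a, w⁆,
    mul_inv_cancel_right]

lemma comm_central_right_right (a w z : G) (hz : ∀ g : G, g * z = z * g) :
    ⁅a, w * z⁆ = ⁅a, w⁆ := by
  have h1 : ∀ g : G, g * ⁅a, z⁆ = ⁅a, z⁆ * g := by
    intro g; rw [comm_eq_one_of_central hz, mul_one, one_mul]
  rw [comm_mul_right_central a w z h1, comm_eq_one_of_central hz, mul_one]

lemma comm_central_left_right (a z b : G) (hz : ∀ g : G, g * z = z * g) :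
    ⁅a * z, b⁆ = ⁅a, b⁆ := by
  rw [comm_mul_left_eq, comm_eq_one_of_central' hz, mul_one, mul_inv_cancel, one_mul]

lemma comm_pow_left (a u : G) (h : ∀ g w : G, ⁅g, u⁆ * w = w * ⁅g, u⁆) (n : ℕ) :
    ⁅a ^ n, u⁆ = ⁅a, u⁆ ^ n := by
  induction n with
  | zero => simp [pow_zero, commutatorElement_one_left]
  | succ n ih =>
      rw [pow_succ, comm_mul_left_eq, ih, ← h a (a ^ n), mul_assoc ⁅a, u⁆ (a ^ n) (a ^ n)⁻¹,
        mul_inv_cancel, mul_one, ← pow_succ']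

lemma comm_pow_right (a u : G) (h : ∀ (k : ℕ) (w : G), ⁅a, u ^ k⁆ * w = w * ⁅a, u ^ k⁆) (n : ℕ) :
    ⁅a, u ^ n⁆ = ⁅a, u⁆ ^ n := by
  induction n with
  | zero => simp [pow_zero, commutatorElement_one_right]
  | succ n ih =>
      rw [pow_succ', comm_mul_right_eq, ← h n u, mul_assoc ⁅a, u ^ n⁆ u u⁻¹, mul_inv_cancel,
        mul_one, ih, ← pow_succ']

lemma comm_mem_lcs_succ' {n : ℕ} {x : G} (hx : x ∈ (⊤ : Subgroup G).lowerCentralSeries n) (g : G) :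
    ⁅x, g⁆ ∈ (⊤ : Subgroup G).lowerCentralSeries (n + 1) := by
  rw [Subgroup.lowerCentralSeries_succ]
  exact commutator_mem_commutator hx (mem_top g)

lemma comm_mem_lcs_succ {n : ℕ} {x : G} (hx : x ∈ (⊤ : Subgroup G).lowerCentralSeries n) (g : G) :
    ⁅g, x⁆ ∈ (⊤ : Subgroup G).lowerCentralSeries (n + 1) := by
  rw [← commutatorElement_inv]
  exact inv_mem (comm_mem_lcs_succ' hx g)

lemma central_of_lcs_bot {n : ℕ} (hbot : (⊤ : Subgroup G).lowerCentralSeries (n + 1) = ⊥) {x : G}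
    (hx : x ∈ (⊤ : Subgroup G).lowerCentralSeries n) : ∀ g : G, g * x = x * g := by
  intro g
  have h1 : ⁅x, g⁆ = 1 := by
    have := comm_mem_lcs_succ' hx g
    rw [hbot, Subgroup.mem_bot] at this
    exact this
  rw [commutatorElement_def] at h1
  have := mul_eq_one_iff_eq_inv.mp h1
  -- x * g * x⁻¹ * g⁻¹ = 1 → x * g = g * x
  have h2 : x * g = g * x := by
    have h3 : x * g * x⁻¹ = g := by
      have := congrArg (· * g) h1
      simpa [mul_assoc] using this
    calc x * g = (x * g * x⁻¹) * x := by simp [mul_assoc]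
    _ = g * x := by rw [h3]
  exact h2.symm

end Helpers
section ComWord

variable {r : ℕ}

/-- Iterated (right-nested) commutator of generators along a list of indices. -/
def comWord {G : Type u} [Group G] (s : Fin r → G) : Fin r → List (Fin r) → G
  | i, [] => s i
  | i, j :: l => ⁅s i, comWord s j l⁆

variable {G : Type u} [Group G]

@[simp] lemma comWord_nil (s : Fin r → G) (i : Fin r) : comWord s i [] = s i := rfl

@[simp] lemma comWord_cons (s : Fin r → G) (i j : Fin r) (l : List (Fin r)) :
    comWord s i (j :: l) = ⁅s i, comWord s j l⁆ := rfl

lemma comWord_mem {s : Fin r → G} {H : Subgroup G} (hs : ∀ i, s i ∈ H) (i : Fin r)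
    (l : List (Fin r)) : comWord s i l ∈ H := by
  induction l generalizing i with
  | nil => exact hs i
  | cons j l ih =>
      rw [comWord_cons, commutatorElement_def]
      exact mul_mem (mul_mem (mul_mem (hs i) (ih j)) (inv_mem (hs i))) (inv_mem (ih j))

lemma comWord_mem_lcs (s : Fin r → G) (i : Fin r) (l : List (Fin r)) :
    comWord s i l ∈ (⊤ : Subgroup G).lowerCentralSeries l.length := by
  induction l generalizing i with
  | nil => exact mem_top _
  | cons j l ih => exact comm_mem_lcs_succ (ih j) (s i)

lemma comWord_map {G' : Type u} [Group G'] (f : G →* G') (s : Fin r → G) (i : Fin r)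
    (l : List (Fin r)) : f (comWord s i l) = comWord (f ∘ s) i l := by
  induction l generalizing i with
  | nil => rfl
  | cons j l ih => rw [comWord_cons, map_commutatorElement, ih, comWord_cons]; rfl

lemma lcs_map_surj {G₁ G₂ : Type u} [Group G₁] [Group G₂] (f : G₁ →* G₂)
    (hf : Function.Surjective f) (n : ℕ) :
    ((⊤ : Subgroup G₁).lowerCentralSeries n).map f = (⊤ : Subgroup G₂).lowerCentralSeries n := by
  induction n with
  | zero => exact Subgroup.map_top_of_surjective f hf
  | succ n ih =>
      show Subgroup.map f ⁅(⊤ : Subgroup G₁).lowerCentralSeries n, ⊤⁆ = ⁅(⊤ : Subgroup G₂).lowerCentralSeries n, ⊤⁆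
      rw [Subgroup.map_commutator, ih, Subgroup.map_top_of_surjective f hf]

lemma lcs_quot_bot (n : ℕ) {G : Type u} [Group G] :
    (⊤ : Subgroup (G ⧸ (⊤ : Subgroup G).lowerCentralSeries n)).lowerCentralSeries n = ⊥ := by
  rw [← lcs_map_surj (QuotientGroup.mk' _) (QuotientGroup.mk'_surjective _) n]
  rw [Subgroup.map_eq_bot_iff, QuotientGroup.ker_mk']

lemma comWord_pow (m : ℕ) :
    ∀ (l : List (Fin r)) {G : Type u} [Group G] (s : Fin r → G) (i : Fin r),
      (⊤ : Subgroup G).lowerCentralSeries (l.length + 1) = ⊥ →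
      comWord s i l ^ m ^ (l.length + 1) = comWord (fun j => s j ^ m) i l := by
  intro l
  induction l with
  | nil => intro G _ s i _; simp
  | cons j t ih =>
      intro G _ s i hbot
      have hlen : (j :: t).length = t.length + 1 := rfl
      rw [hlen] at hbot
      -- the `mod` version of the inductive hypothesis, in `G`
      have hmod : comWord s j t ^ m ^ (t.length + 1) * (comWord (fun j' => s j' ^ m) j t)⁻¹ ∈
          (⊤ : Subgroup G).lowerCentralSeries (t.length + 1) := by
        rw [← QuotientGroup.eq_one_iff (N := (⊤ : Subgroup G).lowerCentralSeries (t.length + 1))]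
        set N := (⊤ : Subgroup G).lowerCentralSeries (t.length + 1) with hN
        have hq := ih ((QuotientGroup.mk' N) ∘ s) j (lcs_quot_bot (t.length + 1))
        have hpush : ((comWord s j t ^ m ^ (t.length + 1) *
            (comWord (fun j' => s j' ^ m) j t)⁻¹ : G) : G ⧸ N) =
            (QuotientGroup.mk' N) (comWord s j t) ^ m ^ (t.length + 1) *
            ((QuotientGroup.mk' N) (comWord (fun j' => s j' ^ m) j t))⁻¹ := by
          simp
        rw [hpush, comWord_map, comWord_map, hq]
        have : ((QuotientGroup.mk' N) ∘ fun j' => s j' ^ m) =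
            fun j' => ((QuotientGroup.mk' N) ∘ s) j' ^ m := by
          funext j'; simp
        rw [this, mul_inv_cancel]
      set u := comWord s j t with hu
      set v := comWord (fun j' => s j' ^ m) j t with hv
      set z := u ^ m ^ (t.length + 1) * v⁻¹ with hzdef
      have hzc : ∀ g : G, g * z = z * g := central_of_lcs_bot hbot hmod
      have hveq : v = z⁻¹ * u ^ m ^ (t.length + 1) := by rw [hzdef]; group
      have humem : ∀ p : ℕ, u ^ p ∈ (⊤ : Subgroup G).lowerCentralSeries t.length := fun p =>
        pow_mem (hu ▸ comWord_mem_lcs s j t) p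
      have hcen : ∀ p : ℕ, ∀ g w : G, ⁅g, u ^ p⁆ * w = w * ⁅g, u ^ p⁆ := by
        intro p g w
        exact (central_of_lcs_bot hbot (comm_mem_lcs_succ (humem p) g) w).symm
      have hzinv : ∀ g : G, g * z⁻¹ = z⁻¹ * g := fun g => (Commute.inv_right (hzc g : Commute g z)).eq
      have key : ⁅s i ^ m, v⁆ = ⁅s i, u⁆ ^ m ^ (t.length + 2) := by
        rw [hveq, comm_central_right_left _ _ _ hzinv,
          comm_pow_left (s i) (u ^ m ^ (t.length + 1)) (hcen (m ^ (t.length + 1))) m,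
          comm_pow_right (s i) u (fun k w => hcen k (s i) w) (m ^ (t.length + 1)),
          ← pow_mul, ← pow_succ]
      show ⁅s i, u⁆ ^ m ^ (t.length + 1 + 1) = ⁅s i ^ m, v⁆
      exact key.symm
/-- The set of iterated commutators of the generators of "weight" `n+1`. -/
def comSet {G : Type u} [Group G] (s : Fin r → G) (n : ℕ) : Set G :=
  {x | ∃ (i : Fin r) (l : List (Fin r)), l.length = n ∧ comWord s i l = x}

lemma comSet_finite (s : Fin r → G) (n : ℕ) : (comSet s n).Finite := by
  induction n with
  | zero =>
      refine (Set.finite_range s).subset ?_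
      rintro x ⟨i, l, hl, rfl⟩
      rw [List.length_eq_zero_iff] at hl
      subst hl
      exact ⟨i, rfl⟩
  | succ n ih =>
      refine ((Set.finite_univ.prod ih).image fun p : Fin r × G => ⁅s p.1, p.2⁆).subset ?_
      rintro x ⟨i, l, hl, rfl⟩
      cases l with
      | nil => simp at hl
      | cons j t =>
          refine ⟨(i, comWord s j t), ⟨Set.mem_univ _, ⟨j, t, by simpa using hl, rfl⟩⟩, rfl⟩

lemma comSet_map {G' : Type u} [Group G'] (f : G →* G') (s : Fin r → G) (n : ℕ) :
    comSet (f ∘ s) n = f '' comSet s n := by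
  ext x
  constructor
  · rintro ⟨i, l, hl, rfl⟩
    exact ⟨comWord s i l, ⟨i, l, hl, rfl⟩, comWord_map f s i l⟩
  · rintro ⟨y, ⟨i, l, hl, rfl⟩, rfl⟩
    exact ⟨i, l, hl, (comWord_map f s i l).symm⟩

lemma comSet_subset_lcs (s : Fin r → G) (n : ℕ) :
    comSet s n ⊆ ((⊤ : Subgroup G).lowerCentralSeries n : Set G) := by
  rintro x ⟨i, l, hl, rfl⟩
  exact hl ▸ comWord_mem_lcs s i l

lemma lcs_le_closure_comSet :
    ∀ (n : ℕ) {G : Type u} [Group G] (s : Fin r → G),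
      closure (Set.range s) = ⊤ → (⊤ : Subgroup G).lowerCentralSeries (n + 1) = ⊥ →
      (⊤ : Subgroup G).lowerCentralSeries n ≤ closure (comSet s n) := by
  intro n
  induction n with
  | zero =>
      intro G _ s hgen _
      have h1 : Set.range s ⊆ comSet s 0 := by
        rintro x ⟨i, rfl⟩
        exact ⟨i, [], rfl, rfl⟩
      calc (⊤ : Subgroup G).lowerCentralSeries 0 ≤ ⊤ := le_top
        _ = closure (Set.range s) := hgen.symm
        _ ≤ closure (comSet s 0) := closure_mono h1
  | succ n ih =>
      intro G _ s hgen hbot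
      set M := closure (comSet s (n + 1)) with hM
      set N := (⊤ : Subgroup G).lowerCentralSeries (n + 1) with hN
      haveI hNn : N.Normal := hN ▸ Subgroup.lowerCentralSeries_normal ⊤ (n + 1)
      set π := QuotientGroup.mk' N with hπdef
      have hπ : Function.Surjective π := QuotientGroup.mk'_surjective N
      have hgenQ : closure (Set.range (π ∘ s)) = ⊤ := by
        rw [Set.range_comp, ← MonoidHom.map_closure, hgen, Subgroup.map_top_of_surjective _ hπ]
      have hQbot : (⊤ : Subgroup (G ⧸ N)).lowerCentralSeries (n + 1) = ⊥ := lcs_quot_bot (n + 1)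
      have hsub : (⊤ : Subgroup G).lowerCentralSeries n ≤ closure (comSet s n) ⊔ N := by
        have h1 : Subgroup.map π ((⊤ : Subgroup G).lowerCentralSeries n) ≤
            Subgroup.map π (closure (comSet s n)) := by
          calc Subgroup.map π ((⊤ : Subgroup G).lowerCentralSeries n) ≤ (⊤ : Subgroup (G ⧸ N)).lowerCentralSeries n :=
                lowerCentralSeries.map π n
            _ ≤ closure (comSet (π ∘ s) n) := ih (π ∘ s) hgenQ hQbot
            _ = closure (π '' comSet s n) := by rw [comSet_map]
            _ = Subgroup.map π (closure (comSet s n)) := (MonoidHom.map_closure _ _).symm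
        calc (⊤ : Subgroup G).lowerCentralSeries n ≤
            Subgroup.comap π (Subgroup.map π ((⊤ : Subgroup G).lowerCentralSeries n)) := fun x hx => Subgroup.mem_comap.mpr (Subgroup.mem_map_of_mem π hx)
          _ ≤ Subgroup.comap π (Subgroup.map π (closure (comSet s n))) := Subgroup.comap_mono h1
          _ = closure (comSet s n) ⊔ N := by rw [Subgroup.comap_map_eq, QuotientGroup.ker_mk']
      have hc : ∀ x ∈ N, ∀ g : G, g * x = x * g := fun x hx =>
        central_of_lcs_bot hbot (hN ▸ hx)
      -- Step B : commutators of generators with elements of `lcs n` lie in `M`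
      have hB : ∀ i' : Fin r, ∀ x ∈ (⊤ : Subgroup G).lowerCentralSeries n, ⁅s i', x⁆ ∈ M := by
        intro i'
        let X : Subgroup G :=
          { carrier := {x | x ∈ (⊤ : Subgroup G).lowerCentralSeries n ∧ ⁅s i', x⁆ ∈ M}
            one_mem' := ⟨one_mem _, by rw [commutatorElement_one_right]; exact one_mem M⟩
            mul_mem' := by
              rintro x y ⟨hx1, hx2⟩ ⟨hy1, hy2⟩
              refine ⟨mul_mem hx1 hy1, ?_⟩
              rw [comm_mul_right_central _ _ _ (hc _ (comm_mem_lcs_succ hy1 (s i')))]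
              exact mul_mem hx2 hy2
            inv_mem' := by
              rintro x ⟨hx1, hx2⟩
              refine ⟨inv_mem hx1, ?_⟩
              rw [comm_inv_right_central _ _ (hc _ (comm_mem_lcs_succ (inv_mem hx1) (s i')))]
              exact inv_mem hx2 }
        have hX : closure (comSet s n) ⊔ N ≤ X := by
          refine sup_le ?_ ?_
          · rw [closure_le]
            rintro x ⟨i0, l, hl, rfl⟩
            refine ⟨hl ▸ comWord_mem_lcs s i0 l, ?_⟩
            exact subset_closure ⟨i', i0 :: l, by simp [hl], rfl⟩
          · intro x hx
            refine ⟨Subgroup.lowerCentralSeries_antitone ⊤ (Nat.le_succ n) (hN ▸ hx), ?_⟩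
            have h1 : ⁅x, s i'⁆ ∈ (⊤ : Subgroup G).lowerCentralSeries (n + 2) :=
              comm_mem_lcs_succ' (hN ▸ hx) (s i')
            rw [hbot, Subgroup.mem_bot] at h1
            rw [← commutatorElement_inv, h1, inv_one]
            exact one_mem M
        intro x hx
        exact (hX (hsub hx)).2
      -- Step A : commutators of arbitrary elements with elements of `lcs n` lie in `M`
      have hA : ∀ x ∈ (⊤ : Subgroup G).lowerCentralSeries n, ∀ g : G, ⁅g, x⁆ ∈ M := by
        intro x hx
        let Y : Subgroup G :=
          { carrier := {g | ⁅g, x⁆ ∈ M}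
            one_mem' := by
              show ⁅(1 : G), x⁆ ∈ M
              rw [commutatorElement_one_left]; exact one_mem M
            mul_mem' := by
              intro a b ha hb
              show ⁅a * b, x⁆ ∈ M
              rw [comm_mul_left_central a b x (hc _ (comm_mem_lcs_succ hx b))]
              exact mul_mem hb ha
            inv_mem' := by
              intro a ha
              show ⁅a⁻¹, x⁆ ∈ M
              rw [comm_inv_left_central a x (hc _ (comm_mem_lcs_succ hx a⁻¹))]
              exact inv_mem ha }
        have hY : (⊤ : Subgroup G) ≤ Y := by
          rw [← hgen, closure_le]
          rintro g ⟨i', rfl⟩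
          exact hB i' x hx
        intro g
        exact hY (mem_top g)
      show (⊤ : Subgroup G).lowerCentralSeries (n + 1) ≤ M
      have : (⊤ : Subgroup G).lowerCentralSeries (n + 1) = ⁅(⊤ : Subgroup G).lowerCentralSeries n, (⊤ : Subgroup G)⁆ := rfl
      rw [this, Subgroup.commutator_le]
      intro x hx g _
      rw [← commutatorElement_inv]
      exact inv_mem (hA x hx g)
/-- If `B` contains the commutator subgroup of `A`, `A` is generated by a finite set `S`, and
`x ^ M ∈ B` for every `x ∈ S` (with `M > 0`), then `B` has finite index. -/
lemma ablem {A : Type u} [Group A] (B : Subgroup A)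
    (hB : ⁅(⊤ : Subgroup A), (⊤ : Subgroup A)⁆ ≤ B) (S : Set A) (hfin : S.Finite)
    (hgen : closure S = ⊤) (M : ℕ) (hM : 0 < M) (hpow : ∀ x ∈ S, x ^ M ∈ B) :
    B.FiniteIndex := by
  haveI hN : B.Normal := by
    constructor
    intro b hb g
    have h1 : ⁅g, b⁆ ∈ B := hB (Subgroup.commutator_mem_commutator (mem_top g) (mem_top b))
    have h2 : g * b * g⁻¹ = ⁅g, b⁆ * b := by group
    rw [h2]; exact mul_mem h1 hb
  letI : CommGroup (A ⧸ B) :=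
    { (inferInstance : Group (A ⧸ B)) with
      mul_comm := by
        intro x y
        refine QuotientGroup.induction_on x fun a => QuotientGroup.induction_on y fun b => ?_
        show ((a * b : A) : A ⧸ B) = ((b * a : A) : A ⧸ B)
        rw [QuotientGroup.eq]
        have h3 : (a * b)⁻¹ * (b * a) = ⁅b⁻¹, a⁻¹⁆ := by group
        rw [h3]
        exact hB (Subgroup.commutator_mem_commutator (mem_top _) (mem_top _)) }
  haveI : Group.FG (A ⧸ B) := by
    rw [Group.fg_iff]
    refine ⟨QuotientGroup.mk '' S, ?_, hfin.image _⟩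
    have : (QuotientGroup.mk : A → A ⧸ B) = QuotientGroup.mk' B := rfl
    rw [this, ← MonoidHom.map_closure, hgen,
      Subgroup.map_top_of_surjective _ (QuotientGroup.mk'_surjective B)]
  have htor : Monoid.IsTorsion (A ⧸ B) := by
    intro q
    have hle : closure (QuotientGroup.mk '' S : Set (A ⧸ B)) ≤ CommGroup.torsion (A ⧸ B) := by
      rw [closure_le]
      rintro x ⟨a, ha, rfl⟩
      rw [SetLike.mem_coe, CommGroup.mem_torsion, isOfFinOrder_iff_pow_eq_one]
      refine ⟨M, hM, ?_⟩
      rw [← QuotientGroup.mk_pow, QuotientGroup.eq_one_iff]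
      exact hpow a ha
    have hq : q ∈ closure (QuotientGroup.mk '' S : Set (A ⧸ B)) := by
      have : (QuotientGroup.mk : A → A ⧸ B) = QuotientGroup.mk' B := rfl
      rw [this, ← MonoidHom.map_closure, hgen,
        Subgroup.map_top_of_surjective _ (QuotientGroup.mk'_surjective B)]
      exact mem_top q
    exact (CommGroup.mem_torsion _).mp (hle hq)
  haveI : Finite (A ⧸ B) := CommGroup.finite_of_fg_torsion _ htor
  exact Subgroup.finiteIndex_of_finite_quotient (H := B)

lemma main_aux {r : ℕ} :
    ∀ (n : ℕ) {G : Type u} [Group G] (s : Fin r → G),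
      (⊤ : Subgroup G).lowerCentralSeries n = ⊥ → closure (Set.range s) = ⊤ → ∀ m : ℕ, 1 ≤ m →
      (closure (Set.range fun i => s i ^ m)).FiniteIndex := by
  intro n
  induction n with
  | zero =>
      intro G _ s hbot hgen m hm
      have hsub : Subsingleton G := by
        constructor
        intro a b
        have h1 : ∀ x : G, x ∈ (⊥ : Subgroup G) := fun x => hbot ▸ mem_top x
        rw [Subgroup.mem_bot.mp (h1 a), Subgroup.mem_bot.mp (h1 b)]
      haveI : Finite G := Finite.of_subsingleton
      infer_instance
  | succ n ih =>
      intro G _ s hbot hgen m hm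
      haveI hNn : ((⊤ : Subgroup G).lowerCentralSeries n).Normal := Subgroup.lowerCentralSeries_normal ⊤ n
      set H := closure (Set.range fun i => s i ^ m) with hH
      set π := QuotientGroup.mk' ((⊤ : Subgroup G).lowerCentralSeries n) with hπdef
      have hπ : Function.Surjective π := QuotientGroup.mk'_surjective _
      have hQbot : (⊤ : Subgroup (G ⧸ (⊤ : Subgroup G).lowerCentralSeries n)).lowerCentralSeries n = ⊥ := lcs_quot_bot n
      have hgenQ : closure (Set.range (π ∘ s)) = ⊤ := by
        rw [Set.range_comp, ← MonoidHom.map_closure, hgen, Subgroup.map_top_of_surjective _ hπ]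
      have hKQ : (closure (Set.range fun i => (π ∘ s) i ^ m)).FiniteIndex :=
        ih (π ∘ s) hQbot hgenQ m hm
      have hmapH : Subgroup.map π H = closure (Set.range fun i => (π ∘ s) i ^ m) := by
        have hfun : (⇑π ∘ fun i => s i ^ m) = fun i => (⇑π ∘ s) i ^ m := by funext i; simp
        rw [hH, MonoidHom.map_closure, ← Set.range_comp, hfun]
      have hHN : (H ⊔ (⊤ : Subgroup G).lowerCentralSeries n).FiniteIndex := by
        refine ⟨?_⟩
        have h1 : (Subgroup.comap π (closure (Set.range fun i => (π ∘ s) i ^ m))).index ≠ 0 := by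
          rw [Subgroup.index_comap_of_surjective _ hπ]
          exact hKQ.index_ne_zero
        have h2 : Subgroup.comap π (closure (Set.range fun i => (π ∘ s) i ^ m)) =
            H ⊔ (⊤ : Subgroup G).lowerCentralSeries n := by
          rw [← hmapH, Subgroup.comap_map_eq, QuotientGroup.ker_mk']
        rwa [h2] at h1
      -- The subgroup generated by the power generators together with the central commutators
      set U : Set G := (Set.range fun i => s i ^ m) ∪ comSet s n with hU
      set K := closure U with hK
      have hHK : H ≤ K := closure_mono Set.subset_union_left
      have hCK : closure (comSet s n) ≤ K := closure_mono Set.subset_union_right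
      haveI hKfi : K.FiniteIndex := by
        haveI := hHN
        exact Subgroup.finiteIndex_of_le
          (sup_le hHK (le_trans (lcs_le_closure_comSet n s hgen hbot) hCK))
      have hc : ∀ x ∈ (⊤ : Subgroup G).lowerCentralSeries n, ∀ g : G, g * x = x * g := fun x hx =>
        central_of_lcs_bot hbot hx
      -- commutators of elements of `K` lie in `H`
      have hKH : ∀ x ∈ K, ∀ y ∈ K, ⁅x, y⁆ ∈ H := by
        have hKle : K ≤ H ⊔ Subgroup.center G := by
          rw [hK, closure_le]
          rintro x (hx | hx)
          · exact Subgroup.mem_sup_left (subset_closure hx)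
          · exact Subgroup.mem_sup_right
              (Subgroup.mem_center_iff.mpr (hc x (comSet_subset_lcs s n hx)))
        intro x hx y hy
        have hx' : x ∈ ((H : Set G) * (Subgroup.center G : Set G)) := by
          rw [← Subgroup.mul_normal]; exact hKle hx
        have hy' : y ∈ ((H : Set G) * (Subgroup.center G : Set G)) := by
          rw [← Subgroup.mul_normal]; exact hKle hy
        obtain ⟨h1, hh1, z1, hz1, rfl⟩ := hx'
        obtain ⟨h2, hh2, z2, hz2, rfl⟩ := hy'
        have hz1c : ∀ g : G, g * z1 = z1 * g := fun g => (Subgroup.mem_center_iff.mp hz1 g)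
        have hz2c : ∀ g : G, g * z2 = z2 * g := fun g => (Subgroup.mem_center_iff.mp hz2 g)
        rw [comm_central_left_right _ _ _ hz1c, comm_central_right_right _ _ _ hz2c,
          commutatorElement_def]
        exact mul_mem (mul_mem (mul_mem hh1 hh2) (inv_mem hh1)) (inv_mem hh2)
      -- powers of the elements of `U` lie in `H`
      have hpowU : ∀ x ∈ U, x ^ m ^ (n + 1) ∈ H := by
        rintro x (hx | ⟨i, l, hl, rfl⟩)
        · exact pow_mem (subset_closure hx) _
        · have hbot' : (⊤ : Subgroup G).lowerCentralSeries (l.length + 1) = ⊥ := by rw [hl]; exact hbot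
          have heq := comWord_pow m l s i hbot'
          rw [hl] at heq
          rw [heq]
          exact comWord_mem (H := H) (fun j => subset_closure (Set.mem_range_self (f := fun i => s i ^ m) j)) i l
      -- apply the abelian lemma inside `K`
      have hrel : (H.subgroupOf K).FiniteIndex := by
        refine ablem (H.subgroupOf K) ?_ (((↑) : K → G) ⁻¹' U) ?_ ?_ (m ^ (n + 1))
          (pow_pos hm (n + 1)) ?_
        · rw [Subgroup.commutator_le]
          intro g₁ _ g₂ _
          rw [Subgroup.mem_subgroupOf]
          exact hKH _ g₁.2 _ g₂.2
        · exact (((Set.finite_range _).union (comSet_finite s n)).preimage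
            (Set.injOn_of_injective Subtype.coe_injective))
        · exact Subgroup.closure_closure_coe_preimage
        · intro x hx
          rw [Subgroup.mem_subgroupOf]
          have : ((x ^ m ^ (n + 1) : K) : G) = (x : G) ^ m ^ (n + 1) := by
            simp
          rw [this]
          exact hpowU _ hx
      refine ⟨?_⟩
      have hmul : H.relIndex K * K.index = H.index := Subgroup.relIndex_mul_index hHK
      rw [← hmul]
      exact Nat.mul_ne_zero hrel.index_ne_zero hKfi.index_ne_zero

end ComWord

/-- Lemma: in a finitely generated nilpotent group `G = ⟨s₁,…,s_r⟩`, the subgroup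
`⟨s₁^m,…,s_r^m⟩` generated by the `m`-th powers of the generators has finite index. -/
theorem powers_of_generators_finite_index {G : Type*} [Group G] [Group.IsNilpotent G]
    (r : ℕ) (s : Fin r → G) (hgen : Subgroup.closure (Set.range s) = ⊤)
    (m : ℕ) (hm : 1 ≤ m) :
    (Subgroup.closure (Set.range fun i => s i ^ m)).FiniteIndex := by
  obtain ⟨n, hn⟩ := Subgroup.nilpotent_iff_lowerCentralSeries.mp ‹Group.IsNilpotent G›
  exact main_aux n s hn hgen m hm
end
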